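/- arXiv:math/0310024 — 10 statements merged into one kernel-verified Lean document; each statement's English description precedes it below -/
import Mathlib

section
/- For every real orthogonal s × s matrix ξ = (ξ_{ij}), the linear map ξ̂ : ℝ^{3s} → ℝ^{3s} defined on basis vectors by ξ̂(U_i) = Σ_j ξ_{ij} U_j, ξ̂(T_i) = Σ_j ξ_{ij} T_j, and ξ̂(V_i) = Σ_j ξ_{ij} V_j preserves both structures: g(ξ̂x, ξ̂y) = g(x, y) and R(ξ̂x, ξ̂y, ξ̂z, ξ̂w) = R(x, y, z, w) for all x, y, z, w ∈ ℝ^{3s}. -/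
open scoped BigOperators

noncomputable section

/-- Index type for `ℝ^{3s}`: the first block indexes `U_1,…,U_s`, the second block
`T_1,…,T_s`, the third block `V_1,…,V_s`. -/
abbrev Ix (s : ℕ) := Fin s ⊕ Fin s ⊕ Fin s

/-- The vector space `ℝ^{3s}`. -/
abbrev Vc (s : ℕ) := Ix s → ℝ

def uI {s : ℕ} (i : Fin s) : Ix s := Sum.inl i
def tI {s : ℕ} (i : Fin s) : Ix s := Sum.inr (Sum.inl i)
def vI {s : ℕ} (i : Fin s) : Ix s := Sum.inr (Sum.inr i)

/-- The standard basis vector `U_i`. -/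
def Uv {s : ℕ} (i : Fin s) : Vc s := Pi.single (uI i) 1
/-- The standard basis vector `T_i`. -/
def Tv {s : ℕ} (i : Fin s) : Vc s := Pi.single (tI i) 1
/-- The standard basis vector `V_i`. -/
def Vv {s : ℕ} (i : Fin s) : Vc s := Pi.single (vI i) 1

/-- The symmetric bilinear form `g` on `ℝ^{3s}` whose only nonzero values on the
standard basis vectors are `g(U_i,V_i) = g(V_i,U_i) = 1` and `g(T_i,T_i) = -1`. -/
def gM (s : ℕ) (x y : Vc s) : ℝ :=
  ∑ i, (x (uI i) * y (vI i) + x (vI i) * y (uI i) - x (tI i) * y (tI i))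

/-- The 4-linear form `R` on `ℝ^{3s}` determined by the `ℤ₂`-symmetries
`R(x,y,z,w) = R(z,w,x,y) = -R(y,x,z,w)` and whose nonzero values on the standard
basis vectors, up to those symmetries, are `R(U_i,U_j,U_j,T_i) = 1` for `i ≠ j`.
(The eight summands below are precisely the full `ℤ₂`-orbit of the generating
components; the summands cancel in pairs when `i = j`.) -/
def RM (s : ℕ) (x y z w : Vc s) : ℝ :=
  ∑ i, ∑ j,
    (x (uI i) * y (uI j) * z (uI j) * w (tI i)
     - x (uI j) * y (uI i) * z (uI j) * w (tI i)
     - x (uI i) * y (uI j) * z (tI i) * w (uI j)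
     + x (uI j) * y (uI i) * z (tI i) * w (uI j)
     + x (uI j) * y (tI i) * z (uI i) * w (uI j)
     - x (tI i) * y (uI j) * z (uI i) * w (uI j)
     - x (uI j) * y (tI i) * z (uI j) * w (uI i)
     + x (tI i) * y (uI j) * z (uI j) * w (uI i))

/-- `Z_i^+ = U_i + (1/2) V_i`. -/
def Zp {s : ℕ} (i : Fin s) : Vc s := Uv i + (2⁻¹ : ℝ) • Vv i
/-- `Z_i^- = U_i - (1/2) V_i`. -/
def Zm {s : ℕ} (i : Fin s) : Vc s := Uv i - (2⁻¹ : ℝ) • Vv i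

lemma vec_decomp {s : ℕ} (x : Vc s) :
    x = ∑ i : Fin s, x (uI i) • Uv i + (∑ i : Fin s, x (tI i) • Tv i + ∑ i : Fin s, x (vI i) • Vv i) := by
  funext k
  simp only [Pi.add_apply, Finset.sum_apply, Pi.smul_apply, Uv, Tv, Vv, Pi.single_apply,
    smul_eq_mul, mul_ite, mul_one, mul_zero]
  rcases k with i | i | i <;>
    simp [uI, tI, vI, Finset.sum_ite_eq']

lemma key_orth {s : ℕ} (ξ : Matrix (Fin s) (Fin s) ℝ) (hξ : ξ * ξ.transpose = 1)
    (f g : Fin s → ℝ) :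
    ∑ j, (∑ a, ξ a j * f a) * (∑ b, ξ b j * g b) = ∑ a, f a * g a := by
  have h : ∀ a b : Fin s, ∑ j, ξ a j * ξ b j = if a = b then 1 else 0 := by
    intro a b
    have := congrFun (congrFun hξ a) b
    simpa [Matrix.mul_apply, Matrix.transpose_apply, Matrix.one_apply] using this
  calc ∑ j, (∑ a, ξ a j * f a) * (∑ b, ξ b j * g b)
      = ∑ j, ∑ a, ∑ b, (ξ a j * f a) * (ξ b j * g b) := by
        simp [Finset.sum_mul_sum]
    _ = ∑ a, ∑ b, ∑ j, (ξ a j * f a) * (ξ b j * g b) := by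
        rw [Finset.sum_comm]
        refine Finset.sum_congr rfl fun a _ => ?_
        rw [Finset.sum_comm]
    _ = ∑ a, ∑ b, (f a * g b) * ∑ j, ξ a j * ξ b j := by
        refine Finset.sum_congr rfl fun a _ => Finset.sum_congr rfl fun b _ => ?_
        rw [Finset.mul_sum]
        exact Finset.sum_congr rfl fun j _ => by ring
    _ = ∑ a, f a * g a := by
        simp [h, mul_ite, Finset.sum_ite_eq']

lemma gM_factor (s : ℕ) (x y : Vc s) :
    gM s x y = (∑ i, x (uI i) * y (vI i)) + (∑ i, x (vI i) * y (uI i))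
      - ∑ i, x (tI i) * y (tI i) := by
  unfold gM
  rw [Finset.sum_sub_distrib, Finset.sum_add_distrib]

lemma RM_factor (s : ℕ) (x y z w : Vc s) :
    RM s x y z w =
      (∑ i, x (uI i) * w (tI i)) * (∑ j, y (uI j) * z (uI j))
      - (∑ i, y (uI i) * w (tI i)) * (∑ j, x (uI j) * z (uI j))
      - (∑ i, x (uI i) * z (tI i)) * (∑ j, y (uI j) * w (uI j))
      + (∑ i, y (uI i) * z (tI i)) * (∑ j, x (uI j) * w (uI j))
      + (∑ i, y (tI i) * z (uI i)) * (∑ j, x (uI j) * w (uI j))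
      - (∑ i, x (tI i) * z (uI i)) * (∑ j, y (uI j) * w (uI j))
      - (∑ i, y (tI i) * w (uI i)) * (∑ j, x (uI j) * z (uI j))
      + (∑ i, x (tI i) * w (uI i)) * (∑ j, y (uI j) * z (uI j)) := by
  unfold RM
  simp only [Finset.sum_mul_sum, ← Finset.sum_sub_distrib, ← Finset.sum_add_distrib]
  refine Finset.sum_congr rfl fun i _ => Finset.sum_congr rfl fun j _ => by ring

/-- for every real orthogonal `s × s` matrix `ξ`, the linear map `Ξ`
defined on basis vectors by `Ξ(U_i) = Σ_j ξ_{ij} U_j`, `Ξ(T_i) = Σ_j ξ_{ij} T_j`,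
`Ξ(V_i) = Σ_j ξ_{ij} V_j` preserves both `g` and `R`. -/
theorem stmt2 (s : ℕ) (hs : 2 ≤ s) (ξ : Matrix (Fin s) (Fin s) ℝ)
    (hξ : ξ.transpose * ξ = 1)
    (Ξ : Vc s →ₗ[ℝ] Vc s)
    (hU : ∀ i, Ξ (Uv i) = ∑ j, ξ i j • Uv j)
    (hT : ∀ i, Ξ (Tv i) = ∑ j, ξ i j • Tv j)
    (hV : ∀ i, Ξ (Vv i) = ∑ j, ξ i j • Vv j) :
    (∀ x y : Vc s, gM s (Ξ x) (Ξ y) = gM s x y) ∧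
    (∀ x y z w : Vc s, RM s (Ξ x) (Ξ y) (Ξ z) (Ξ w) = RM s x y z w) := by
  have hξ' : ξ * ξ.transpose = 1 := mul_eq_one_comm.mp hξ
  have coord : ∀ (x : Vc s) (j : Fin s),
      Ξ x (uI j) = ∑ i, ξ i j * x (uI i) ∧
      Ξ x (tI j) = ∑ i, ξ i j * x (tI i) ∧
      Ξ x (vI j) = ∑ i, ξ i j * x (vI i) := by
    intro x j
    have hx : Ξ x = ∑ i : Fin s, x (uI i) • Ξ (Uv i)
        + (∑ i : Fin s, x (tI i) • Ξ (Tv i) + ∑ i : Fin s, x (vI i) • Ξ (Vv i)) := by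
      conv_lhs => rw [vec_decomp x]
      simp [map_add, map_sum, map_smul]
    refine ⟨?_, ?_, ?_⟩ <;>
    · rw [hx]
      simp only [hU, hT, hV]
      simp only [Pi.add_apply, Finset.sum_apply, Pi.smul_apply, Uv, Tv, Vv,
        Pi.single_apply, smul_eq_mul, mul_ite, mul_one, mul_zero, uI, tI, vI,
        Sum.inl.injEq, Sum.inr.injEq]
      simp [Finset.sum_ite_eq', mul_comm]
  have hu : ∀ (z : Vc s) (j : Fin s), Ξ z (uI j) = ∑ i, ξ i j * z (uI i) :=
    fun z j => (coord z j).1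
  have ht : ∀ (z : Vc s) (j : Fin s), Ξ z (tI j) = ∑ i, ξ i j * z (tI i) :=
    fun z j => (coord z j).2.1
  have hv : ∀ (z : Vc s) (j : Fin s), Ξ z (vI j) = ∑ i, ξ i j * z (vI i) :=
    fun z j => (coord z j).2.2
  have pUV : ∀ x y : Vc s, ∑ i, Ξ x (uI i) * Ξ y (vI i) = ∑ i, x (uI i) * y (vI i) := by
    intro x y; simp only [hu, hv]; exact key_orth ξ hξ' _ _
  have pVU : ∀ x y : Vc s, ∑ i, Ξ x (vI i) * Ξ y (uI i) = ∑ i, x (vI i) * y (uI i) := by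
    intro x y; simp only [hu, hv]; exact key_orth ξ hξ' _ _
  have pTT : ∀ x y : Vc s, ∑ i, Ξ x (tI i) * Ξ y (tI i) = ∑ i, x (tI i) * y (tI i) := by
    intro x y; simp only [ht]; exact key_orth ξ hξ' _ _
  have pUT : ∀ x y : Vc s, ∑ i, Ξ x (uI i) * Ξ y (tI i) = ∑ i, x (uI i) * y (tI i) := by
    intro x y; simp only [hu, ht]; exact key_orth ξ hξ' _ _
  have pTU : ∀ x y : Vc s, ∑ i, Ξ x (tI i) * Ξ y (uI i) = ∑ i, x (tI i) * y (uI i) := by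
    intro x y; simp only [hu, ht]; exact key_orth ξ hξ' _ _
  have pUU : ∀ x y : Vc s, ∑ i, Ξ x (uI i) * Ξ y (uI i) = ∑ i, x (uI i) * y (uI i) := by
    intro x y; simp only [hu]; exact key_orth ξ hξ' _ _
  constructor
  · intro x y
    rw [gM_factor, gM_factor, pUV, pVU, pTT]
  · intro x y z w
    rw [RM_factor, RM_factor]
    simp only [pUT, pUU, pTU]
end
end

section
/- If X ∈ ℝ^{3s} is spacelike, i.e. g(X, X) > 0, then the Jacobi operator J(X) satisfies rank J(X) = 2(s − 1) and rank J(X)² = s − 1. -/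
open scoped BigOperators

noncomputable section

/- In the theorems below, the Jacobi operator is taken as a function
`J : ℝ^{3s} → End(ℝ^{3s})` together with the hypothesis that it satisfies its defining
property `g(J(x)y, w) = R(y,x,x,w)` for all `x, y, w`; since `g` is nondegenerate this
characterizes `J` uniquely. -/

namespace Stmt3Aux

variable {s : ℕ}

/-- Dot product on `Fin s → ℝ`. -/
def dot (a p : Fin s → ℝ) : ℝ := ∑ i, a i * p i

lemma dot_comm (a p : Fin s → ℝ) : dot a p = dot p a := by
  unfold dot; exact Finset.sum_congr rfl fun i _ => mul_comm _ _

lemma dot_add_right (a p q : Fin s → ℝ) : dot a (p + q) = dot a p + dot a q := by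
  unfold dot; rw [← Finset.sum_add_distrib]
  exact Finset.sum_congr rfl fun i _ => by simp [mul_add]

lemma dot_smul_right (a : Fin s → ℝ) (c : ℝ) (p : Fin s → ℝ) :
    dot a (c • p) = c * dot a p := by
  unfold dot; rw [Finset.mul_sum]
  exact Finset.sum_congr rfl fun i _ => by simp [Pi.smul_apply]; ring

lemma dot_zero_right (a : Fin s → ℝ) : dot a 0 = 0 := by simp [dot]

lemma dot_self_nonneg (a : Fin s → ℝ) : 0 ≤ dot a a :=
  Finset.sum_nonneg fun i _ => mul_self_nonneg _

lemma eq_zero_of_dot_self (a : Fin s → ℝ) (h : dot a a = 0) : a = 0 := by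
  funext i
  have := (Finset.sum_eq_zero_iff_of_nonneg (fun i _ => mul_self_nonneg (a i))).1 h i
    (Finset.mem_univ i)
  simpa [mul_self_eq_zero] using this

/-- The operator `M p = (a·a) p - (a·p) a`. -/
def Mop (a : Fin s → ℝ) : (Fin s → ℝ) →ₗ[ℝ] (Fin s → ℝ) where
  toFun p := dot a a • p - dot a p • a
  map_add' p q := by
    rw [dot_add_right, add_smul, smul_add]; abel
  map_smul' c p := by
    rw [dot_smul_right, RingHom.id_apply, mul_smul, smul_sub, smul_comm]

lemma Mop_apply (a p : Fin s → ℝ) : Mop a p = dot a a • p - dot a p • a := rfl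

lemma Mop_apply' (a p : Fin s → ℝ) (k : Fin s) :
    Mop a p k = dot a a * p k - dot a p * a k := rfl

lemma Mop_self (a : Fin s → ℝ) : Mop a a = 0 := by
  simp [Mop_apply]

lemma Mop_eq_zero_iff (a : Fin s → ℝ) (h : dot a a ≠ 0) (p : Fin s → ℝ) :
    Mop a p = 0 ↔ ∃ c : ℝ, p = c • a := by
  constructor
  · intro hp
    refine ⟨dot a p / dot a a, ?_⟩
    have h1 : dot a a • p - dot a p • a = 0 := hp
    have h2 : dot a a • p = dot a p • a := by
      rw [sub_eq_zero] at h1; exact h1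
    funext i
    have := congrFun h2 i
    simp only [Pi.smul_apply, smul_eq_mul] at this ⊢
    field_simp
    linarith [this]
  · rintro ⟨c, rfl⟩
    rw [map_smul, Mop_self, smul_zero]

lemma dot_Mop_left (a p q : Fin s → ℝ) :
    dot (Mop a p) q = dot a a * dot p q - dot a p * dot a q := by
  unfold dot
  rw [Finset.mul_sum, Finset.mul_sum, ← Finset.sum_sub_distrib]
  refine Finset.sum_congr rfl fun i _ => ?_
  rw [Mop_apply']
  simp only [dot]
  ring

lemma Mop_Mop_eq_zero_iff (a p : Fin s → ℝ) :
    Mop a (Mop a p) = 0 ↔ Mop a p = 0 := by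
  constructor
  · intro h
    have e1 : dot (Mop a p) (Mop a p)
        = dot a a * dot p (Mop a p) - dot a p * dot a (Mop a p) := dot_Mop_left a p (Mop a p)
    have e2 : dot a a * dot (Mop a p) p - dot a (Mop a p) * dot a p = 0 := by
      have h3 := dot_Mop_left a (Mop a p) p
      rw [h] at h3
      simpa [dot] using h3.symm
    have h1 : dot (Mop a p) (Mop a p) = 0 := by
      rw [e1, dot_comm p (Mop a p)]; linarith
    exact eq_zero_of_dot_self _ h1
  · intro h; rw [h, map_zero]

end Stmt3Aux

namespace Stmt3Aux

variable {s : ℕ}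

/-- Parametrization of the kernel of `J X`. -/
def Phi (a b : Fin s → ℝ) : (ℝ × ℝ × (Fin s → ℝ)) →ₗ[ℝ] Vc s where
  toFun p := Sum.elim (fun i => p.1 * a i)
    (Sum.elim (fun i => p.1 * b i + p.2.1 * a i) p.2.2)
  map_add' p q := by
    funext x; rcases x with i | i | i <;> simp <;> ring
  map_smul' c p := by
    funext x; rcases x with i | i | i <;> simp <;> ring

@[simp] lemma Phi_u (a b : Fin s → ℝ) (p) (i : Fin s) :
    Phi a b p (uI i) = p.1 * a i := rfl
@[simp] lemma Phi_t (a b : Fin s → ℝ) (p) (i : Fin s) :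
    Phi a b p (tI i) = p.1 * b i + p.2.1 * a i := rfl
@[simp] lemma Phi_v (a b : Fin s → ℝ) (p) (i : Fin s) :
    Phi a b p (vI i) = p.2.2 i := rfl

lemma Phi_injective (a b : Fin s → ℝ) (ha : a ≠ 0) :
    Function.Injective (Phi a b) := by
  rw [injective_iff_map_eq_zero]
  intro p hp
  obtain ⟨i0, hi0⟩ := Function.ne_iff.1 ha
  have h1 : p.1 * a i0 = 0 := congrFun hp (uI i0)
  have hp1 : p.1 = 0 := by
    rcases mul_eq_zero.1 h1 with h | h
    · exact h
    · exact absurd h hi0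
  have h2 : p.1 * b i0 + p.2.1 * a i0 = 0 := congrFun hp (tI i0)
  have hp2 : p.2.1 = 0 := by
    rw [hp1, zero_mul, zero_add] at h2
    rcases mul_eq_zero.1 h2 with h | h
    · exact h
    · exact absurd h hi0
  have hp3 : p.2.2 = 0 := funext fun i => congrFun hp (vI i)
  exact Prod.ext hp1 (Prod.ext hp2 hp3)

/-- Parametrization of the kernel of `J X ^ 2`. -/
def Phi2 (a : Fin s → ℝ) : (ℝ × (Fin s → ℝ) × (Fin s → ℝ)) →ₗ[ℝ] Vc s where
  toFun p := Sum.elim (fun i => p.1 * a i) (Sum.elim p.2.1 p.2.2)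
  map_add' p q := by
    funext x; rcases x with i | i | i <;> simp <;> ring
  map_smul' c p := by
    funext x; rcases x with i | i | i <;> simp <;> ring

@[simp] lemma Phi2_u (a : Fin s → ℝ) (p) (i : Fin s) :
    Phi2 a p (uI i) = p.1 * a i := rfl
@[simp] lemma Phi2_t (a : Fin s → ℝ) (p) (i : Fin s) :
    Phi2 a p (tI i) = p.2.1 i := rfl
@[simp] lemma Phi2_v (a : Fin s → ℝ) (p) (i : Fin s) :
    Phi2 a p (vI i) = p.2.2 i := rfl

lemma Phi2_injective (a : Fin s → ℝ) (ha : a ≠ 0) :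
    Function.Injective (Phi2 a) := by
  rw [injective_iff_map_eq_zero]
  intro p hp
  obtain ⟨i0, hi0⟩ := Function.ne_iff.1 ha
  have h1 : p.1 * a i0 = 0 := congrFun hp (uI i0)
  have hp1 : p.1 = 0 := by
    rcases mul_eq_zero.1 h1 with h | h
    · exact h
    · exact absurd h hi0
  have hp2 : p.2.1 = 0 := funext fun i => congrFun hp (tI i)
  have hp3 : p.2.2 = 0 := funext fun i => congrFun hp (vI i)
  exact Prod.ext hp1 (Prod.ext hp2 hp3)

end Stmt3Aux

namespace Stmt3Aux

variable {s : ℕ}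

lemma gM_Vv (z : Vc s) (k : Fin s) : gM s z (Vv k) = z (uI k) := by
  simp [gM, Vv, uI, tI, vI, Pi.single_apply, Finset.sum_ite_eq']

lemma gM_Uv (z : Vc s) (k : Fin s) : gM s z (Uv k) = z (vI k) := by
  simp [gM, Uv, uI, tI, vI, Pi.single_apply, Finset.sum_ite_eq']

lemma gM_Tv (z : Vc s) (k : Fin s) : gM s z (Tv k) = -(z (tI k)) := by
  simp [gM, Tv, uI, tI, vI, Pi.single_apply, Finset.sum_ite_eq']

lemma RM_Vv (y X : Vc s) (k : Fin s) : RM s y X X (Vv k) = 0 := by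
  simp [RM, Vv, vI, uI, tI, Pi.single_apply]

lemma RM_Tv (y X : Vc s) (k : Fin s) :
    RM s y X X (Tv k) = Mop (fun i => X (uI i)) (fun i => y (uI i)) k := by
  have h1 : RM s y X X (Tv k) =
      ∑ j, (y (uI k) * X (uI j) * X (uI j) - y (uI j) * X (uI k) * X (uI j)) := by
    simp [RM, Tv, vI, uI, tI, Pi.single_apply, mul_ite, ite_mul,
      Finset.sum_ite_eq', Finset.sum_sub_distrib]
  rw [h1, Mop_apply']
  simp only [dot]
  rw [Finset.sum_mul, Finset.sum_mul, ← Finset.sum_sub_distrib]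
  exact Finset.sum_congr rfl fun i _ => by ring

lemma RM_Uv (y X : Vc s) (k : Fin s) :
    RM s y X X (Uv k) =
      Mop (fun i => X (uI i)) (fun i => y (tI i)) k
      + 2 * dot (fun i => X (uI i)) (fun i => X (tI i)) * y (uI k)
      - dot (fun i => X (tI i)) (fun i => y (uI i)) * X (uI k)
      - dot (fun i => X (uI i)) (fun i => y (uI i)) * X (tI k) := by
  have h1 : RM s y X X (Uv k) =
      ∑ i, (- (y (uI i) * X (uI k) * X (tI i)) + 2 * (y (uI k) * X (uI i) * X (tI i))
        - y (tI i) * X (uI k) * X (uI i) - y (uI i) * X (tI k) * X (uI i)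
        + y (tI k) * X (uI i) * X (uI i)) := by
    simp only [RM, Uv, vI, uI, tI, Pi.single_apply, mul_ite, ite_mul, mul_one, mul_zero,
      zero_mul, one_mul, Sum.inl.injEq, Sum.inr.injEq, reduceCtorEq, if_false,
      Finset.sum_ite_eq', Finset.mem_univ, if_true, Finset.sum_sub_distrib,
      Finset.sum_add_distrib, Finset.sum_ite_irrel, Finset.sum_const_zero, Finset.sum_ite_eq]
    simp only [zero_sub, sub_zero, zero_add, add_zero, ← Finset.sum_neg_distrib,
      ← Finset.sum_add_distrib, ← Finset.sum_sub_distrib]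
    exact Finset.sum_congr rfl (fun i _ => by ring)
  rw [h1, Mop_apply']
  simp only [dot]
  simp only [Finset.sum_mul, Finset.mul_sum]
  simp only [zero_sub, sub_zero, zero_add, add_zero, ← Finset.sum_neg_distrib,
    ← Finset.sum_add_distrib, ← Finset.sum_sub_distrib]
  exact Finset.sum_congr rfl fun i _ => by ring

end Stmt3Aux

open Stmt3Aux

/-- if `X` is spacelike (`g(X,X) > 0`), then the Jacobi operator `J(X)`
satisfies `rank J(X) = 2(s-1)` and `rank J(X)² = s-1`. -/
theorem stmt3 (s : ℕ) (hs : 2 ≤ s)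
    (J : Vc s → Module.End ℝ (Vc s))
    (hJ : ∀ x y w : Vc s, gM s (J x y) w = RM s y x x w)
    (X : Vc s) (hX : 0 < gM s X X) :
    Module.finrank ℝ (LinearMap.range (J X)) = 2 * (s - 1) ∧
    Module.finrank ℝ (LinearMap.range (J X ^ 2)) = s - 1 := by
  classical
  set a : Fin s → ℝ := fun i => X (uI i) with ha_def
  set b : Fin s → ℝ := fun i => X (tI i) with hb_def
  -- `a ≠ 0` and `dot a a ≠ 0` since `X` is spacelike
  have hA : dot a a ≠ 0 := by
    intro h0
    have ha0 : a = 0 := eq_zero_of_dot_self a h0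
    have hz : ∀ i, X (uI i) = 0 := fun i => congrFun ha0 i
    have hle : gM s X X ≤ 0 := by
      rw [gM]
      apply Finset.sum_nonpos
      intro i _
      rw [hz i]
      nlinarith [sq_nonneg (X (tI i))]
    linarith
  have haz : a ≠ 0 := fun h => hA (by rw [h]; simp [dot])
  -- component formulas for J X
  have h_u : ∀ (y : Vc s) (k : Fin s), J X y (uI k) = 0 := by
    intro y k
    rw [← gM_Vv (J X y) k, hJ, RM_Vv]
  have h_t : ∀ (y : Vc s) (k : Fin s),
      J X y (tI k) = -(Mop a (fun i => y (uI i)) k) := by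
    intro y k
    have := gM_Tv (J X y) k
    rw [hJ, RM_Tv] at this
    rw [← ha_def] at this
    linarith
  have h_v : ∀ (y : Vc s) (k : Fin s),
      J X y (vI k) = Mop a (fun i => y (tI i)) k + 2 * dot a b * y (uI k)
        - dot b (fun i => y (uI i)) * a k - dot a (fun i => y (uI i)) * b k := by
    intro y k
    have := gM_Uv (J X y) k
    rw [hJ, RM_Uv] at this
    rw [← ha_def, ← hb_def] at this
    rw [← this]
  -- kernel of J X
  have hker1 : LinearMap.ker (J X) = LinearMap.range (Phi a b) := by
    ext y
    simp only [LinearMap.mem_ker, LinearMap.mem_range]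
    constructor
    · intro hy
      have hcomp : ∀ x, J X y x = 0 := fun x => congrFun hy x
      have ht0 : Mop a (fun i => y (uI i)) = 0 := by
        funext k
        have := hcomp (tI k)
        rw [h_t] at this
        simpa using this.symm
      obtain ⟨c, hc⟩ := (Mop_eq_zero_iff a hA _).1 ht0
      have hyu : ∀ i, y (uI i) = c * a i := by
        intro i; have := congrFun hc i; simpa using this
      have hv0 : Mop a ((fun i => y (tI i)) - c • b) = 0 := by
        funext k
        have h1 := hcomp (vI k)
        rw [h_v] at h1
        have hd1 : dot b (fun i => y (uI i)) = c * dot b a := by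
          rw [show (fun i => y (uI i)) = c • a from funext fun i => by simpa using hyu i,
            dot_smul_right]
        have hd2 : dot a (fun i => y (uI i)) = c * dot a a := by
          rw [show (fun i => y (uI i)) = c • a from funext fun i => by simpa using hyu i,
            dot_smul_right]
        rw [hyu k, hd1, hd2, dot_comm b a] at h1
        rw [map_sub, map_smul]
        simp only [Pi.sub_apply, Pi.smul_apply, smul_eq_mul, Pi.zero_apply]
        rw [Mop_apply' a b k]
        rw [Mop_apply'] at h1 ⊢
        ring_nf
        ring_nf at h1
        linarith
      obtain ⟨d, hd⟩ := (Mop_eq_zero_iff a hA _).1 hv0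
      refine ⟨(c, d, fun i => y (vI i)), ?_⟩
      funext x
      rcases x with i | i | i
      · rw [show (Sum.inl i : Ix s) = uI i from rfl, Phi_u, hyu i]
      · rw [show (Sum.inr (Sum.inl i) : Ix s) = tI i from rfl, Phi_t]
        have := congrFun hd i
        simp only [Pi.sub_apply, Pi.smul_apply, smul_eq_mul] at this
        linarith
      · rfl
    · rintro ⟨p, rfl⟩
      funext x
      rcases x with k | k | k
      · rw [show (Sum.inl k : Ix s) = uI k from rfl, h_u]; rfl
      · rw [show (Sum.inr (Sum.inl k) : Ix s) = tI k from rfl, h_t]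
        have : (fun i => Phi a b p (uI i)) = p.1 • a := by
          funext i; simp [Phi_u]
        rw [this, map_smul, Mop_self]
        simp
      · rw [show (Sum.inr (Sum.inr k) : Ix s) = vI k from rfl, h_v]
        have h1 : (fun i => Phi a b p (tI i)) = p.1 • b + p.2.1 • a := by
          funext i; simp [Phi_t]
        have h2 : (fun i => Phi a b p (uI i)) = p.1 • a := by
          funext i; simp [Phi_u]
        rw [h1, h2, map_add, map_smul, map_smul, Mop_self, smul_zero, add_zero,
          Phi_u, dot_smul_right, dot_smul_right, dot_comm b a]
        simp only [Pi.smul_apply, smul_eq_mul, Mop_apply', Pi.zero_apply]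
        ring
  -- power formula
  have hpow : ∀ y : Vc s, (J X ^ 2) y = J X (J X y) := by
    intro y; rw [pow_two]; rfl
  -- kernel of J X ^ 2
  have hker2 : LinearMap.ker (J X ^ 2) = LinearMap.range (Phi2 a) := by
    ext y
    simp only [LinearMap.mem_ker, LinearMap.mem_range]
    have hu0 : (fun i => J X y (uI i)) = 0 := funext fun i => h_u y i
    have ht1 : (fun i => J X y (tI i)) = -(Mop a (fun i => y (uI i))) :=
      funext fun i => by rw [h_t]; rfl
    constructor
    · intro hy
      rw [hpow] at hy
      have hcomp : ∀ x, J X (J X y) x = 0 := fun x => congrFun hy x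
      have hMM : Mop a (Mop a (fun i => y (uI i))) = 0 := by
        funext k
        have h1 := hcomp (vI k)
        rw [h_v] at h1
        rw [hu0, ht1, h_u y k, dot_zero_right, dot_zero_right, map_neg] at h1
        simp only [Pi.neg_apply, Pi.zero_apply] at h1 ⊢
        linarith
      have hM0 : Mop a (fun i => y (uI i)) = 0 := (Mop_Mop_eq_zero_iff a _).1 hMM
      obtain ⟨c, hc⟩ := (Mop_eq_zero_iff a hA _).1 hM0
      refine ⟨(c, fun i => y (tI i), fun i => y (vI i)), ?_⟩
      funext x
      rcases x with i | i | i
      · rw [show (Sum.inl i : Ix s) = uI i from rfl, Phi2_u]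
        have := congrFun hc i; simpa using this.symm
      · rfl
      · rfl
    · rintro ⟨p, rfl⟩
      rw [hpow]
      have hu2 : (fun i => Phi2 a p (uI i)) = p.1 • a := by
        funext i; simp [Phi2_u]
      funext x
      rcases x with k | k | k
      · rw [show (Sum.inl k : Ix s) = uI k from rfl, h_u]; rfl
      · rw [show (Sum.inr (Sum.inl k) : Ix s) = tI k from rfl, h_t]
        have : (fun i => J X (Phi2 a p) (uI i)) = 0 := funext fun i => h_u _ i
        rw [this, map_zero]
        simp
      · rw [show (Sum.inr (Sum.inr k) : Ix s) = vI k from rfl, h_v]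
        have h1 : (fun i => J X (Phi2 a p) (uI i)) = 0 := funext fun i => h_u _ i
        have h2 : (fun i => J X (Phi2 a p) (tI i)) = -(Mop a (fun i => Phi2 a p (uI i))) :=
          funext fun i => by rw [h_t]; rfl
        rw [h1, h2, hu2, map_smul, Mop_self, smul_zero, neg_zero, map_zero, h_u,
          dot_zero_right, dot_zero_right]
        simp
  -- dimension counts
  have hVc : Module.finrank ℝ (Vc s) = 3 * s := by
    rw [Module.finrank_fintype_fun_eq_card]
    simp only [Fintype.card_sum, Fintype.card_fin]
    omega
  have hdom1 : Module.finrank ℝ (ℝ × ℝ × (Fin s → ℝ)) = s + 2 := by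
    rw [Module.finrank_prod, Module.finrank_prod, Module.finrank_self,
      Module.finrank_fintype_fun_eq_card]
    simp only [Fintype.card_fin]
    omega
  have hdom2 : Module.finrank ℝ (ℝ × (Fin s → ℝ) × (Fin s → ℝ)) = 2 * s + 1 := by
    rw [Module.finrank_prod, Module.finrank_prod, Module.finrank_self,
      Module.finrank_fintype_fun_eq_card]
    simp only [Fintype.card_fin]
    omega
  have hk1 : Module.finrank ℝ (LinearMap.ker (J X)) = s + 2 := by
    rw [hker1, LinearMap.finrank_range_of_inj (Phi_injective a b haz), hdom1]
  have hk2 : Module.finrank ℝ (LinearMap.ker (J X ^ 2)) = 2 * s + 1 := by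
    rw [hker2, LinearMap.finrank_range_of_inj (Phi2_injective a haz), hdom2]
  have hrn1 := LinearMap.finrank_range_add_finrank_ker (J X)
  have hrn2 := LinearMap.finrank_range_add_finrank_ker (J X ^ 2)
  rw [hVc, hk1] at hrn1
  rw [hVc, hk2] at hrn2
  constructor
  · omega
  · omega
end
end

section
/- For every vector X ∈ ℝ^{3s}, the Jacobi operator satisfies J(X)³ = 0; in particular J(X) is nilpotent of order at most 3 and has trace zero. -/
open scoped BigOperators

noncomputable section

/- In the theorems below, the Jacobi operator is taken as a function
`J : ℝ^{3s} → End(ℝ^{3s})` together with the hypothesis that it satisfies its defining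
property `g(J(x)y, w) = R(y,x,x,w)` for all `x, y, w`; since `g` is nondegenerate this
characterizes `J` uniquely. -/


lemma gM_Vv (s : ℕ) (z : Vc s) (k : Fin s) : gM s z (Vv k) = z (uI k) := by
  simp [gM, Vv, uI, tI, vI, Pi.single_apply]

lemma gM_Uv (s : ℕ) (z : Vc s) (k : Fin s) : gM s z (Uv k) = z (vI k) := by
  simp [gM, Uv, uI, tI, vI, Pi.single_apply]

lemma gM_Tv (s : ℕ) (z : Vc s) (k : Fin s) : gM s z (Tv k) = - z (tI k) := by
  simp [gM, Tv, uI, tI, vI, Pi.single_apply]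

lemma RM_Vv (s : ℕ) (y x : Vc s) (k : Fin s) : RM s y x x (Vv k) = 0 := by
  simp [RM, Vv, uI, tI, vI, Pi.single_apply]

lemma RM_Tv (s : ℕ) (y x : Vc s) (k : Fin s) (hu : ∀ i, y (uI i) = 0) :
    RM s y x x (Tv k) = 0 := by
  simp only [uI] at hu
  simp [RM, Tv, uI, tI, vI, Pi.single_apply, hu]

lemma RM_Uv (s : ℕ) (y x : Vc s) (k : Fin s) (hu : ∀ i, y (uI i) = 0)
    (ht : ∀ i, y (tI i) = 0) : RM s y x x (Uv k) = 0 := by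
  simp only [uI] at hu
  simp only [tI] at ht
  simp [RM, Uv, uI, tI, vI, Pi.single_apply, hu, ht]

/-- for every `X`, the Jacobi operator satisfies `J(X)³ = 0`; in
particular `J(X)` is nilpotent (of order at most `3`) and has trace zero. -/
theorem stmt4 (s : ℕ) (hs : 2 ≤ s)
    (J : Vc s → Module.End ℝ (Vc s))
    (hJ : ∀ x y w : Vc s, gM s (J x y) w = RM s y x x w)
    (X : Vc s) :
    J X ^ 3 = 0 ∧ IsNilpotent (J X) ∧ LinearMap.trace ℝ (Vc s) (J X) = 0 := by
  have hu1 : ∀ (v : Vc s) (k : Fin s), (J X v) (uI k) = 0 := by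
    intro v k
    rw [← gM_Vv s (J X v) k, hJ, RM_Vv]
  have ht1 : ∀ (v : Vc s), (∀ i, v (uI i) = 0) → ∀ k, (J X v) (tI k) = 0 := by
    intro v hv k
    have h := gM_Tv s (J X v) k
    rw [hJ, RM_Tv s v X k hv] at h
    linarith
  have hv1 : ∀ (v : Vc s), (∀ i, v (uI i) = 0) → (∀ i, v (tI i) = 0) →
      ∀ k, (J X v) (vI k) = 0 := by
    intro v hv ht k
    rw [← gM_Uv s (J X v) k, hJ, RM_Uv s v X k hv ht]
  have hcube : J X ^ 3 = 0 := by
    apply LinearMap.ext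
    intro y
    have hpow : (J X ^ 3) y = J X (J X (J X y)) := by
      simp [pow_succ, Module.End.mul_apply]
    rw [hpow]
    funext i
    have h2u : ∀ k, (J X (J X y)) (uI k) = 0 := hu1 _
    have h2t : ∀ k, (J X (J X y)) (tI k) = 0 := ht1 _ (hu1 y)
    obtain (k | k | k) := i
    · exact hu1 _ k
    · exact ht1 _ h2u k
    · exact hv1 _ h2u h2t k
  have hnil : IsNilpotent (J X) := ⟨3, hcube⟩
  exact ⟨hcube, hnil,
    (LinearMap.isNilpotent_trace_of_isNilpotent hnil).eq_zero⟩
end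
end

section
/- The model space is spacelike Jordan Osserman: for any two vectors X, Y ∈ ℝ^{3s} with g(X, X) = 1 and g(Y, Y) = 1, the Jacobi operators J(X) and J(Y) are similar, i.e. there exists an invertible linear map P : ℝ^{3s} → ℝ^{3s} with J(Y) = P ∘ J(X) ∘ P⁻¹. -/
/-
Write `X = (a, b, c)` in the blocks `U, T, V` of `ℝ^{3s} = ℝˢ × ℝˢ × ℝˢ`. Then `J(X)` depends
only on `a, b`, and `g(X, X) > 0` forces `a ≠ 0`. A unipotent shear conjugates `J(X)` to the
operator with `b = 0`. That operator is equivariant under the orthogonal group of `ℝˢ` acting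
diagonally, and rescaling the `T` and `V` blocks by `c²` and `c⁴` turns it into the operator for
`c • a`. Since the orthogonal group and the scalings act transitively on `ℝˢ ∖ {0}`, all the
`J(X)` are conjugate.
-/
open scoped BigOperators

noncomputable section

/- In the theorems below, the Jacobi operator is taken as a function
`J : ℝ^{3s} → End(ℝ^{3s})` together with the hypothesis that it satisfies its defining
property `g(J(x)y, w) = R(y,x,x,w)` for all `x, y, w`; since `g` is nondegenerate this
characterizes `J` uniquely. -/

open scoped RealInnerProductSpace

lemma isConj_of_linearEquiv {R M : Type*} [Semiring R] [AddCommMonoid M] [Module R M]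
    {f g : Module.End R M} (P : M ≃ₗ[R] M) (h : ∀ y, P (f y) = g (P y)) : IsConj f g :=
  ⟨LinearMap.GeneralLinearGroup.ofLinearEquiv P, LinearMap.ext h⟩

lemma IsConj.exists_linearEquiv {R M : Type*} [Semiring R] [AddCommMonoid M] [Module R M]
    {f g : Module.End R M} (h : IsConj f g) : ∃ P : M ≃ₗ[R] M, ∀ y, g y = P (f (P.symm y)) := by
  obtain ⟨c, hc⟩ := h
  refine ⟨LinearMap.GeneralLinearGroup.toLinearEquiv c, fun y => ?_⟩
  have h := LinearMap.congr_fun hc (((c⁻¹ : (Module.End R M)ˣ) : Module.End R M) y)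
  have hy : (c : Module.End R M) (((c⁻¹ : (Module.End R M)ˣ) : Module.End R M) y) = y :=
    LinearMap.congr_fun c.mul_inv y
  rw [Module.End.mul_apply, Module.End.mul_apply, hy] at h
  exact h.symm

namespace OssermanModel

variable {W : Type*} [NormedAddCommGroup W] [InnerProductSpace ℝ W]

/-! The model on `W × W × W`, the three factors playing the roles of the `U`, `T` and `V` blocks. -/

def metric (p q : W × W × W) : ℝ := ⟪p.1, q.2.2⟫ + ⟪p.2.2, q.1⟫ - ⟪p.2.1, q.2.1⟫

def curvature (x y z w : W × W × W) : ℝ :=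
  ⟪x.1, w.2.1⟫ * ⟪y.1, z.1⟫ - ⟪y.1, w.2.1⟫ * ⟪x.1, z.1⟫ - ⟪x.1, z.2.1⟫ * ⟪y.1, w.1⟫
    + ⟪y.1, z.2.1⟫ * ⟪x.1, w.1⟫ + ⟪y.2.1, z.1⟫ * ⟪x.1, w.1⟫ - ⟪x.2.1, z.1⟫ * ⟪y.1, w.1⟫
    - ⟪y.2.1, w.1⟫ * ⟪x.1, z.1⟫ + ⟪x.2.1, w.1⟫ * ⟪y.1, z.1⟫

/-- The Jacobi operator of a vector with `U`- and `T`-components `a` and `b`. -/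
def jacobi (a b : W) : Module.End ℝ (W × W × W) where
  toFun y := (0, ⟪a, y.1⟫ • a - ‖a‖ ^ 2 • y.1,
    ‖a‖ ^ 2 • y.2.1 - ⟪a, y.2.1⟫ • a - ⟪a, y.1⟫ • b - ⟪b, y.1⟫ • a + (2 * ⟪a, b⟫) • y.1)
  map_add' y z := by
    ext <;> simp only [Prod.fst_add, Prod.snd_add, inner_add_right] <;> module
  map_smul' c y := by
    ext <;> simp only [Prod.smul_fst, Prod.smul_snd, inner_smul_right, RingHom.id_apply] <;> module

@[simp] lemma jacobi_apply (a b : W) (y : W × W × W) :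
    jacobi a b y = (0, ⟪a, y.1⟫ • a - ‖a‖ ^ 2 • y.1,
      ‖a‖ ^ 2 • y.2.1 - ⟪a, y.2.1⟫ • a - ⟪a, y.1⟫ • b - ⟪b, y.1⟫ • a + (2 * ⟪a, b⟫) • y.1) :=
  rfl

lemma metric_jacobi (x y w : W × W × W) :
    metric (jacobi x.1 x.2.1 y) w = curvature y x x w := by
  simp only [metric, curvature, jacobi_apply, real_inner_comm, inner_zero_left, inner_add_left,
    inner_sub_left, inner_smul_left, Real.ringHom_apply, zero_add, inner_self_eq_norm_sq_to_K]
  ring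

lemma eq_of_forall_metric_eq {p q : W × W × W} (h : ∀ w, metric p w = metric q w) : p = q := by
  refine Prod.ext (ext_inner_right ℝ fun e => ?_)
    (Prod.ext (ext_inner_right ℝ fun e => ?_) (ext_inner_right ℝ fun e => ?_))
  · simpa [metric] using h (0, 0, e)
  · simpa [metric] using h (0, e, 0)
  · simpa [metric] using h (e, 0, 0)

lemma fst_ne_zero_of_metric_self_pos {p : W × W × W} (h : 0 < metric p p) : p.1 ≠ 0 := by
  intro h1
  simp only [metric, h1, inner_zero_left, inner_zero_right, zero_add, zero_sub] at h
  linarith [real_inner_self_nonneg (x := p.2.1)]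

/- Here `b - (⟪a, b⟫ / ‖a‖ ^ 2) • a` is the component of `b` orthogonal to `a`; the coefficients
solve the intertwining equation of `semiconjBy_one_add_shear`, block by block. -/
def shear (a b : W) : Module.End ℝ (W × W × W) where
  toFun y :=
    let b' := b - (⟪a, b⟫ / ‖a‖ ^ 2) • a
    (0, -(⟪a, y.1⟫ / ‖a‖ ^ 2) • b', (2 * ⟪a, b⟫ / ‖a‖ ^ 2) • y.2.1 - (⟪b', y.2.1⟫ / ‖a‖ ^ 2) • a)
  map_add' y z := by
    ext <;> simp only [Prod.fst_add, Prod.snd_add, inner_add_right] <;> module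
  map_smul' c y := by
    ext <;> simp only [Prod.smul_fst, Prod.smul_snd, inner_smul_right, RingHom.id_apply] <;> module

lemma shear_apply (a b : W) (y : W × W × W) : shear a b y =
    (0, -(⟪a, y.1⟫ / ‖a‖ ^ 2) • (b - (⟪a, b⟫ / ‖a‖ ^ 2) • a),
      (2 * ⟪a, b⟫ / ‖a‖ ^ 2) • y.2.1 - (⟪b - (⟪a, b⟫ / ‖a‖ ^ 2) • a, y.2.1⟫ / ‖a‖ ^ 2) • a) :=
  rfl

lemma shear_pow_three (a b : W) : shear a b ^ 3 = 0 := by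
  ext y <;> simp [pow_succ, shear_apply]

lemma semiconjBy_one_add_shear {a : W} (ha : a ≠ 0) (b : W) :
    SemiconjBy (1 + shear a b) (jacobi a b) (jacobi a 0) := by
  have ha2 : ‖a‖ ^ 2 ≠ 0 := by positivity
  refine LinearMap.ext fun y => Prod.ext ?_ (Prod.ext ?_ ?_)
  · simp [shear_apply]
  · simp [shear_apply]
  · simp only [Module.End.mul_apply, jacobi_apply, LinearMap.add_apply, Module.End.one_apply,
      shear_apply, inner_zero_right, zero_div, neg_zero, zero_smul, inner_sub_right,
      inner_smul_right, inner_sub_left, real_inner_comm a b, inner_smul_left, map_div₀,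
      Real.ringHom_apply, inner_self_eq_norm_sq_to_K, Prod.mk_add_mk, add_zero, neg_smul,
      Prod.fst_add, Prod.snd_add, smul_add, smul_neg, inner_add_right, inner_neg_right, smul_zero,
      sub_zero, inner_zero_left, mul_zero]
    match_scalars <;> field_simp <;> ring

lemma isConj_jacobi_zero {a : W} (ha : a ≠ 0) (b : W) : IsConj (jacobi a b) (jacobi a 0) :=
  ⟨(IsNilpotent.isUnit_one_add ⟨3, shear_pow_three a b⟩).unit, semiconjBy_one_add_shear ha b⟩

lemma isConj_jacobi_map (O : W ≃ₗᵢ[ℝ] W) (a b : W) :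
    IsConj (jacobi a b) (jacobi (O a) (O b)) := by
  refine isConj_of_linearEquiv
    (O.toLinearEquiv.prodCongr (O.toLinearEquiv.prodCongr O.toLinearEquiv)) fun y => ?_
  simp [LinearEquiv.prodCongr_apply]

lemma isConj_jacobi_smul {c : ℝ} (hc : c ≠ 0) (a : W) :
    IsConj (jacobi a 0) (jacobi (c • a) 0) := by
  refine isConj_of_linearEquiv ((LinearEquiv.refl ℝ W).prodCongr
    ((LinearEquiv.smulOfNeZero ℝ W (c ^ 2) (by positivity)).prodCongr
      (LinearEquiv.smulOfNeZero ℝ W (c ^ 4) (by positivity)))) fun y => ?_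
  simp only [jacobi_apply, smul_zero, sub_zero, inner_zero_left, zero_smul, inner_zero_right,
    mul_zero, add_zero, LinearEquiv.prodCongr_apply, LinearEquiv.refl_apply,
    LinearEquiv.smulOfNeZero_apply, inner_smul_left, Real.ringHom_apply, norm_smul,
    Real.norm_eq_abs, mul_pow, sq_abs, inner_smul_right, Prod.mk.injEq, true_and]
  constructor <;> module

theorem isConj_jacobi {a a' : W} (ha : a ≠ 0) (ha' : a' ≠ 0) (b b' : W) :
    IsConj (jacobi a b) (jacobi a' b') := by
  set O := (ℝ ∙ (‖a'‖ • a - ‖a‖ • a'))ᗮ.reflection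
  have hO : (‖a'‖ / ‖a‖) • O a = a' := by
    have h := Submodule.reflection_sub (v := ‖a'‖ • a) (w := ‖a‖ • a')
      (by simp [norm_smul, mul_comm])
    rw [map_smul] at h
    rw [div_eq_inv_mul, mul_smul, h, smul_smul, inv_mul_cancel₀ (norm_ne_zero_iff.2 ha), one_smul]
  have hrotate : IsConj (jacobi a 0) (jacobi (O a) 0) := by
    simpa using isConj_jacobi_map O a 0
  have hscale := isConj_jacobi_smul (c := ‖a'‖ / ‖a‖) (by positivity) (O a)
  rw [hO] at hscale
  exact ((isConj_jacobi_zero ha b).trans (hrotate.trans hscale)).trans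
    (isConj_jacobi_zero ha' b').symm

def coordEquiv (s : ℕ) : Vc s ≃ₗ[ℝ] EuclideanSpace ℝ (Fin s) × EuclideanSpace ℝ (Fin s) ×
    EuclideanSpace ℝ (Fin s) :=
  (LinearEquiv.sumArrowLequivProdArrow _ _ ℝ ℝ).trans
    ((WithLp.linearEquiv 2 ℝ _).symm.prodCongr ((LinearEquiv.sumArrowLequivProdArrow _ _ ℝ ℝ).trans
      ((WithLp.linearEquiv 2 ℝ _).symm.prodCongr (WithLp.linearEquiv 2 ℝ _).symm)))

@[simp] lemma coordEquiv_fst (s : ℕ) (x : Vc s) (i : Fin s) : (coordEquiv s x).1 i = x (uI i) :=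
  rfl

@[simp] lemma coordEquiv_snd_fst (s : ℕ) (x : Vc s) (i : Fin s) :
    (coordEquiv s x).2.1 i = x (tI i) :=
  rfl

@[simp] lemma coordEquiv_snd_snd (s : ℕ) (x : Vc s) (i : Fin s) :
    (coordEquiv s x).2.2 i = x (vI i) :=
  rfl

lemma gM_eq_metric (s : ℕ) (x y : Vc s) :
    gM s x y = metric (coordEquiv s x) (coordEquiv s y) := by
  simp only [gM, metric, EuclideanSpace.inner_eq_star_dotProduct, dotProduct, star_trivial,
    ← Finset.sum_add_distrib, ← Finset.sum_sub_distrib]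
  refine Finset.sum_congr rfl fun i _ => ?_
  simp only [coordEquiv_fst, coordEquiv_snd_fst, coordEquiv_snd_snd]
  ring

lemma RM_eq_curvature (s : ℕ) (x y z w : Vc s) : RM s x y z w =
    curvature (coordEquiv s x) (coordEquiv s y) (coordEquiv s z) (coordEquiv s w) := by
  simp only [RM, curvature, EuclideanSpace.inner_eq_star_dotProduct, dotProduct, star_trivial,
    Finset.sum_mul_sum, ← Finset.sum_add_distrib, ← Finset.sum_sub_distrib]
  refine Finset.sum_congr rfl fun i _ => Finset.sum_congr rfl fun j _ => ?_
  simp only [coordEquiv_fst, coordEquiv_snd_fst]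
  ring

lemma eq_conj_jacobi {s : ℕ} {J : Vc s → Module.End ℝ (Vc s)}
    (hJ : ∀ x y w : Vc s, gM s (J x y) w = RM s y x x w) (x : Vc s) :
    J x = (coordEquiv s).symm.conjAlgEquiv ℝ (jacobi (coordEquiv s x).1 (coordEquiv s x).2.1) := by
  refine LinearMap.ext fun y => (coordEquiv s).injective (eq_of_forall_metric_eq fun w => ?_)
  obtain ⟨w, rfl⟩ := (coordEquiv s).surjective w
  simp only [LinearEquiv.conjAlgEquiv_apply, LinearMap.comp_apply, LinearEquiv.coe_coe,
    LinearEquiv.symm_symm, LinearEquiv.apply_symm_apply]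
  rw [← gM_eq_metric, hJ, RM_eq_curvature, metric_jacobi]

end OssermanModel

open OssermanModel in
theorem stmt5_general (s : ℕ)
    (J : Vc s → Module.End ℝ (Vc s))
    (hJ : ∀ x y w : Vc s, gM s (J x y) w = RM s y x x w)
    (X Y : Vc s) (hX : gM s X X = 1) (hY : gM s Y Y = 1) :
    ∃ P : Vc s ≃ₗ[ℝ] Vc s, ∀ y : Vc s, J Y y = P (J X (P.symm y)) := by
  have ha : ∀ x : Vc s, gM s x x = 1 → (coordEquiv s x).1 ≠ 0 := fun x hx =>
    fst_ne_zero_of_metric_self_pos (by rw [← gM_eq_metric, hx]; exact one_pos)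
  have hconj : IsConj (J X) (J Y) := by
    rw [eq_conj_jacobi hJ X, eq_conj_jacobi hJ Y]
    exact ((coordEquiv s).symm.conjAlgEquiv ℝ).toMonoidHom.map_isConj
      (isConj_jacobi (ha X hX) (ha Y hY) _ _)
  exact hconj.exists_linearEquiv

/-- the model space is spacelike Jordan Osserman: for any unit spacelike
vectors `X, Y` (`g(X,X) = g(Y,Y) = 1`), the Jacobi operators `J(X)` and `J(Y)` are
similar, i.e. conjugate by an invertible linear map of `ℝ^{3s}`. -/
theorem stmt5 (s : ℕ) (hs : 2 ≤ s)
    (J : Vc s → Module.End ℝ (Vc s))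
    (hJ : ∀ x y w : Vc s, gM s (J x y) w = RM s y x x w)
    (X Y : Vc s) (hX : gM s X X = 1) (hY : gM s Y Y = 1) :
    ∃ P : Vc s ≃ₗ[ℝ] Vc s, ∀ y : Vc s, J Y y = P (J X (P.symm y)) :=
  stmt5_general s J hJ X Y hX hY
end
end

section
/- The model space is not timelike Jordan Osserman: the vectors T_1 and Z_1^- := U_1 − (1/2)V_1 are both unit timelike (g(T_1, T_1) = −1 and g(Z_1^-, Z_1^-) = −1), yet J(T_1) = 0 while J(Z_1^-) ≠ 0; in particular J(T_1) and J(Z_1^-) are not similar. -/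
open scoped BigOperators

/-! The curvature `R(y, x, x, w)` vanishes unless `x` has a `U`-component, since every nonzero
component of `R` carries a `U` in its second or third slot; hence `J(T_1) = 0`. In contrast
`R(U_j, x, x, T_j) = ∑_{k ≠ j} x_{U_k}²`, which equals `1` at `x = Z_1^-` and `j = 2`, so
`J(Z_1^-) ≠ 0`. An operator similar to `0` is `0`. -/

noncomputable section

/- In the theorems below, the Jacobi operator is taken as a function
`J : ℝ^{3s} → End(ℝ^{3s})` together with the hypothesis that it satisfies its defining
property `g(J(x)y, w) = R(y,x,x,w)` for all `x, y, w`; since `g` is nondegenerate this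
characterizes `J` uniquely. -/

section Coordinates

variable {s : ℕ} (x : Vc s) (i : Fin s)

lemma gM_Uv_right : gM s x (Uv i) = x (vI i) := by
  simp [gM, Uv, uI, tI, vI, Pi.single_apply]

lemma gM_Vv_right : gM s x (Vv i) = x (uI i) := by
  simp [gM, Vv, uI, tI, vI, Pi.single_apply]

lemma gM_Tv_right : gM s x (Tv i) = -x (tI i) := by
  simp [gM, Tv, uI, tI, vI, Pi.single_apply]

lemma gM_Zm_right : gM s x (Zm i) = x (vI i) - 2⁻¹ * x (uI i) := by
  simp [gM, Zm, Uv, Vv, uI, tI, vI, Pi.single_apply, Finset.sum_add_distrib, mul_ite]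
  ring

lemma gM_Tv_Tv : gM s (Tv i) (Tv i) = -1 := by
  rw [gM_Tv_right]
  simp [Tv]

lemma gM_Zm_Zm : gM s (Zm i) (Zm i) = -1 := by
  rw [gM_Zm_right]
  simp [Zm, Uv, Vv, uI, vI]
  norm_num

lemma eq_zero_of_forall_gM_eq_zero (h : ∀ w, gM s x w = 0) : x = 0 := by
  funext k
  rcases k with i | i | i
  · exact (gM_Vv_right x i).symm.trans (h (Vv i))
  · exact neg_eq_zero.1 <| (gM_Tv_right x i).symm.trans (h (Tv i))
  · exact (gM_Uv_right x i).symm.trans (h (Uv i))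

lemma RM_eq_zero_of_uI_eq_zero (hx : ∀ i, x (uI i) = 0) (y w : Vc s) : RM s y x x w = 0 := by
  simp [RM, hx]

lemma RM_Uv_Tv : RM s (Uv i) x x (Tv i) = ∑ k, x (uI k) ^ 2 - x (uI i) ^ 2 := by
  simp [RM, Uv, Tv, uI, tI, Pi.single_apply, ite_mul, mul_ite, sq]

lemma RM_Uv_Zm_Zm_Tv {i j : Fin s} (hij : i ≠ j) : RM s (Uv j) (Zm i) (Zm i) (Tv j) = 1 := by
  rw [RM_Uv_Tv]
  simp [Zm, Uv, Vv, uI, vI, Pi.single_apply, hij]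

end Coordinates

section Jacobi

variable {s : ℕ} {J : Vc s → Module.End ℝ (Vc s)}

lemma jacobi_eq_zero_iff (hJ : ∀ x y w : Vc s, gM s (J x y) w = RM s y x x w) (x : Vc s) :
    J x = 0 ↔ ∀ y w, RM s y x x w = 0 := by
  constructor
  · intro h y w
    simp [← hJ, h, gM]
  · intro h
    exact LinearMap.ext fun y => eq_zero_of_forall_gM_eq_zero _ fun w => by rw [hJ, h]

lemma jacobi_Tv_eq_zero (hJ : ∀ x y w : Vc s, gM s (J x y) w = RM s y x x w) (i : Fin s) :
    J (Tv i) = 0 :=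
  (jacobi_eq_zero_iff hJ _).2 <|
    RM_eq_zero_of_uI_eq_zero _ fun k => by simp [Tv, uI, tI]

lemma jacobi_Zm_ne_zero (hJ : ∀ x y w : Vc s, gM s (J x y) w = RM s y x x w) {i j : Fin s}
    (hij : i ≠ j) : J (Zm i) ≠ 0 := fun h => by
  simpa [RM_Uv_Zm_Zm_Tv hij] using (jacobi_eq_zero_iff hJ _).1 h (Uv j) (Tv j)

end Jacobi

/-- the model space is not timelike Jordan Osserman: `T_1` and
`Z_1^- = U_1 - (1/2)V_1` are both unit timelike, yet `J(T_1) = 0` while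
`J(Z_1^-) ≠ 0`; in particular `J(T_1)` and `J(Z_1^-)` are not similar. -/
theorem stmt6 (s : ℕ) (hs : 2 ≤ s)
    (J : Vc s → Module.End ℝ (Vc s))
    (hJ : ∀ x y w : Vc s, gM s (J x y) w = RM s y x x w) :
    gM s (Tv ⟨0, by omega⟩) (Tv ⟨0, by omega⟩) = -1 ∧
    gM s (Zm ⟨0, by omega⟩) (Zm ⟨0, by omega⟩) = -1 ∧
    J (Tv ⟨0, by omega⟩) = 0 ∧
    J (Zm ⟨0, by omega⟩) ≠ 0 ∧
    ¬ ∃ P : Vc s ≃ₗ[ℝ] Vc s, ∀ y : Vc s,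
        J (Zm ⟨0, by omega⟩) y = P (J (Tv ⟨0, by omega⟩) (P.symm y)) := by
  have hJT := jacobi_Tv_eq_zero hJ ⟨0, by omega⟩
  have hJZ := jacobi_Zm_ne_zero hJ (i := ⟨0, by omega⟩) (j := ⟨1, by omega⟩) (by simp)
  refine ⟨gM_Tv_Tv _, gM_Zm_Zm _, hJT, hJZ, ?_⟩
  rintro ⟨P, hP⟩
  exact hJZ (LinearMap.ext fun y => by simpa [hJT] using hP y)
end
end

section
/- Let 2 ≤ k ≤ s and let X_1, …, X_k ∈ ℝ^{3s} satisfy g(X_a, X_b) = δ_{ab} for 1 ≤ a, b ≤ k (a spacelike orthonormal k-family). Then the higher order Jacobi operator J(π) := J(X_1) + … + J(X_k) satisfies rank J(π) = 2s, rank J(π)² = s, and J(π)³ = 0. -/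
open scoped BigOperators

noncomputable section

/- In the theorems below, the Jacobi operator is taken as a function
`J : ℝ^{3s} → End(ℝ^{3s})` together with the hypothesis that it satisfies its defining
property `g(J(x)y, w) = R(y,x,x,w)` for all `x, y, w`; since `g` is nondegenerate this
characterizes `J` uniquely. -/
/-- Explicit formula for the Jacobi operator. -/
def Jb {s : ℕ} (x y : Vc s) : Vc s
  | Sum.inl _ => 0
  | Sum.inr (Sum.inl i) =>
      (∑ j, y (uI j) * x (uI j)) * x (uI i) - (∑ j, (x (uI j))^2) * y (uI i)
  | Sum.inr (Sum.inr i) =>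
      (2 * ∑ j, x (uI j) * x (tI j)) * y (uI i) + (∑ j, (x (uI j))^2) * y (tI i)
      - (∑ j, (y (uI j) * x (tI j) + y (tI j) * x (uI j))) * x (uI i)
      - (∑ j, y (uI j) * x (uI j)) * x (tI i)

private def Aq {s : ℕ} (x y w : Vc s) (i j : Fin s) : ℝ :=
  y (uI i) * x (uI j) * x (uI j) * w (tI i) - y (uI j) * x (uI i) * x (uI j) * w (tI i)
    - y (uI j) * x (tI i) * x (uI j) * w (uI i) + y (tI i) * x (uI j) * x (uI j) * w (uI i)

private def Bq {s : ℕ} (x y w : Vc s) (i j : Fin s) : ℝ :=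
  (-(y (uI i) * x (uI j) * x (tI i)) + 2 * (y (uI j) * x (uI i) * x (tI i))
    - y (tI i) * x (uI j) * x (uI i)) * w (uI j)

lemma gJb {s : ℕ} (x y w : Vc s) : gM s (Jb x y) w = RM s y x x w := by
  have hR : RM s y x x w = ∑ i, ∑ j, (Aq x y w i j + Bq x y w i j) := by
    unfold RM
    refine Finset.sum_congr rfl (fun i _ => Finset.sum_congr rfl (fun j _ => ?_))
    simp only [Aq, Bq]; ring
  have hL : gM s (Jb x y) w = ∑ i, ∑ j, (Aq x y w i j + Bq x y w j i) := by
    unfold gM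
    refine Finset.sum_congr rfl (fun i _ => ?_)
    show Jb x y (uI i) * w (vI i) + Jb x y (vI i) * w (uI i) - Jb x y (tI i) * w (tI i) = _
    simp only [Jb, uI, tI, vI, Aq, Bq]
    simp only [Finset.mul_sum, Finset.sum_mul, ← Finset.sum_sub_distrib,
      ← Finset.sum_add_distrib, zero_mul, zero_add]
    refine Finset.sum_congr rfl (fun j _ => ?_)
    ring
  rw [hL, hR]
  simp only [Finset.sum_add_distrib]
  congr 1
  exact Finset.sum_comm
lemma gM_eval_v {s : ℕ} (z : Vc s) (i : Fin s) : gM s z (Vv i) = z (uI i) := by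
  unfold gM Vv
  rw [Finset.sum_eq_single i]
  · simp [uI, tI, vI, Pi.single_apply]
  · intro b _ hb; simp [uI, tI, vI, Pi.single_apply, hb, Ne.symm hb]
  · simp
lemma gM_eval_u {s : ℕ} (z : Vc s) (i : Fin s) : gM s z (Uv i) = z (vI i) := by
  unfold gM Uv
  rw [Finset.sum_eq_single i]
  · simp [uI, tI, vI, Pi.single_apply]
  · intro b _ hb; simp [uI, tI, vI, Pi.single_apply, hb, Ne.symm hb]
  · simp
lemma gM_eval_t {s : ℕ} (z : Vc s) (i : Fin s) : gM s z (Tv i) = - z (tI i) := by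
  unfold gM Tv
  rw [Finset.sum_eq_single i]
  · simp [uI, tI, vI, Pi.single_apply]
  · intro b _ hb; simp [uI, tI, vI, Pi.single_apply, hb, Ne.symm hb]
  · simp

lemma gM_cancel {s : ℕ} (z z' : Vc s) (h : ∀ w, gM s z w = gM s z' w) : z = z' := by
  funext idx
  rcases idx with i | i | i
  · have := h (Vv i); rwa [gM_eval_v, gM_eval_v] at this
  · have := h (Tv i); rw [gM_eval_t, gM_eval_t] at this; exact neg_injective this
  · have := h (Uv i); rwa [gM_eval_u, gM_eval_u] at this
/-- If the `u a` satisfy the orthonormality constraints (together with some `v`, `t`)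
and `z` is an eigenvector-type solution of `M z = 0`, then `z = 0`. -/
lemma Mker {s k : ℕ} (hk2 : 2 ≤ k) (u v t : Fin k → Fin s → ℝ)
    (h : ∀ a b, (∑ j, (u a j * v b j + v a j * u b j - t a j * t b j)) = if a = b then (1:ℝ) else 0)
    (z : Fin s → ℝ)
    (hz : ∀ i, ∑ a, ((∑ j, z j * u a j) * u a i) = (∑ a, ∑ j, (u a j)^2) * z i) :
    z = 0 := by
  by_contra hz0
  have hY : 0 < ∑ j, (z j)^2 := by
    have hex : ∃ j, z j ≠ 0 := by
      by_contra hq; push_neg at hq; exact hz0 (funext fun j => hq j)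
    obtain ⟨j0, hj0⟩ := hex
    exact Finset.sum_pos' (fun j _ => sq_nonneg _) ⟨j0, Finset.mem_univ _, by positivity⟩
  set Y := ∑ j, (z j)^2 with hYdef
  set c := ∑ a, ∑ j, (u a j)^2 with hc
  have hcontr : ∑ a, (∑ j, z j * u a j)^2 = c * Y := by
    calc ∑ a, (∑ j, z j * u a j)^2
        = ∑ a, (∑ j, z j * u a j) * (∑ i, z i * u a i) := by
          exact Finset.sum_congr rfl fun a _ => by rw [sq]
      _ = ∑ a, ∑ i, (∑ j, z j * u a j) * (z i * u a i) := by
          exact Finset.sum_congr rfl fun a _ => by rw [Finset.mul_sum]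
      _ = ∑ i, ∑ a, (∑ j, z j * u a j) * (z i * u a i) := Finset.sum_comm
      _ = ∑ i, (∑ a, ((∑ j, z j * u a j) * u a i)) * z i := by
          refine Finset.sum_congr rfl fun i _ => ?_
          rw [Finset.sum_mul]; exact Finset.sum_congr rfl fun a _ => by ring
      _ = ∑ i, (c * z i) * z i := Finset.sum_congr rfl fun i _ => by rw [hz i]
      _ = c * Y := by
          rw [hYdef, Finset.mul_sum]; exact Finset.sum_congr rfl fun i _ => by ring
  have hCS : ∀ a, (∑ j, z j * u a j)^2 ≤ (∑ j, (u a j)^2) * Y := by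
    intro a
    have h0 := Finset.sum_mul_sq_le_sq_mul_sq Finset.univ z (u a)
    calc (∑ j, z j * u a j)^2 ≤ (∑ j, (z j)^2) * ∑ j, (u a j)^2 := h0
      _ = (∑ j, (u a j)^2) * Y := by rw [mul_comm, hYdef]
  have heq : ∀ a, (∑ j, z j * u a j)^2 = (∑ j, (u a j)^2) * Y := by
    have hsum0 : ∑ a, ((∑ j, (u a j)^2) * Y - (∑ j, z j * u a j)^2) = 0 := by
      rw [Finset.sum_sub_distrib, hcontr, ← Finset.sum_mul, ← hc, sub_self]
    have h1 := (Finset.sum_eq_zero_iff_of_nonneg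
      (fun a _ => sub_nonneg.2 (hCS a))).1 hsum0
    intro a
    have := h1 a (Finset.mem_univ a)
    linarith
  have hYne : Y ≠ 0 := ne_of_gt hY
  have hdep : ∀ a j, u a j = ((∑ j, z j * u a j) / Y) * z j := by
    intro a
    set B := ∑ j, z j * u a j with hB
    have hw : ∑ j, (Y * u a j - B * z j)^2 = 0 := by
      have expand : ∑ j, (Y * u a j - B * z j)^2
          = Y^2 * (∑ j, (u a j)^2) - 2*Y*B^2 + B^2 * Y := by
        calc ∑ j, (Y * u a j - B * z j)^2
            = ∑ j, (Y^2*(u a j)^2 - (2*Y*B)*(z j * u a j) + B^2*(z j)^2) := by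
              exact Finset.sum_congr rfl fun j _ => by ring
          _ = Y^2 * (∑ j, (u a j)^2) - (2*Y*B)*(∑ j, z j * u a j) + B^2 * (∑ j, (z j)^2) := by
              rw [Finset.sum_add_distrib, Finset.sum_sub_distrib, ← Finset.mul_sum,
                ← Finset.mul_sum, ← Finset.mul_sum]
          _ = Y^2 * (∑ j, (u a j)^2) - 2*Y*B^2 + B^2 * Y := by rw [← hB, ← hYdef]; ring
      rw [expand, show B^2 = (∑ j, (u a j)^2) * Y from heq a]; ring
    intro j
    have h2 := (Finset.sum_eq_zero_iff_of_nonneg (fun j _ => sq_nonneg _)).1 hw j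
      (Finset.mem_univ j)
    have h3 : Y * u a j - B * z j = 0 := by
      have := sq_eq_zero_iff.1 h2; exact this
    field_simp
    linarith
  -- final contradiction using indices 0 and 1
  set a0 : Fin k := ⟨0, by omega⟩ with ha0
  set a1 : Fin k := ⟨1, by omega⟩ with ha1
  have hne : a0 ≠ a1 := by simp [ha0, ha1, Fin.ext_iff]
  set r : Fin k → ℝ := fun a => (∑ j, z j * u a j) / Y with hr
  set q : Fin k → ℝ := fun a => ∑ j, z j * v a j with hq
  set T : Fin k → Fin k → ℝ := fun a b => ∑ j, t a j * t b j with hT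
  have hdiag : ∀ a, 2 * (r a * q a) = 1 + T a a := by
    intro a
    have h5 := h a a; rw [if_pos rfl] at h5
    have hsplit : ∑ j, (u a j * v a j + v a j * u a j - t a j * t a j)
        = 2 * (r a * q a) - T a a := by
      calc ∑ j, (u a j * v a j + v a j * u a j - t a j * t a j)
          = ∑ j, (2 * r a * (z j * v a j) - t a j * t a j) := by
            refine Finset.sum_congr rfl fun j _ => ?_
            rw [hdep a j]; ring
        _ = 2 * r a * (∑ j, z j * v a j) - ∑ j, t a j * t a j := by
            rw [Finset.sum_sub_distrib, ← Finset.mul_sum]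
        _ = 2 * (r a * q a) - T a a := by rw [hq, hT]; ring
    rw [hsplit] at h5; linarith
  have hcross : r a0 * q a1 + r a1 * q a0 = T a0 a1 := by
    have h5 := h a0 a1; rw [if_neg hne] at h5
    have hsplit : ∑ j, (u a0 j * v a1 j + v a0 j * u a1 j - t a0 j * t a1 j)
        = r a0 * q a1 + r a1 * q a0 - T a0 a1 := by
      calc ∑ j, (u a0 j * v a1 j + v a0 j * u a1 j - t a0 j * t a1 j)
          = ∑ j, (r a0 * (z j * v a1 j) + r a1 * (z j * v a0 j) - t a0 j * t a1 j) := by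
            refine Finset.sum_congr rfl fun j _ => ?_
            rw [hdep a0 j, hdep a1 j]; ring
        _ = r a0 * (∑ j, z j * v a1 j) + r a1 * (∑ j, z j * v a0 j)
              - ∑ j, t a0 j * t a1 j := by
            rw [Finset.sum_sub_distrib, Finset.sum_add_distrib, ← Finset.mul_sum,
              ← Finset.mul_sum]
        _ = r a0 * q a1 + r a1 * q a0 - T a0 a1 := by rw [hq, hT]
    rw [hsplit] at h5; linarith
  have hTcs : (T a0 a1)^2 ≤ T a0 a0 * T a1 a1 := by
    have h0 := Finset.sum_mul_sq_le_sq_mul_sq Finset.univ (t a0) (t a1)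
    have e0 : T a0 a1 = ∑ j, t a0 j * t a1 j := rfl
    have e1 : T a0 a0 = ∑ j, (t a0 j)^2 := Finset.sum_congr rfl fun j _ => (sq _).symm
    have e2 : T a1 a1 = ∑ j, (t a1 j)^2 := Finset.sum_congr rfl fun j _ => (sq _).symm
    rw [e0, e1, e2]; exact h0
  have hT0 : 0 ≤ T a0 a0 := Finset.sum_nonneg fun j _ => mul_self_nonneg _
  have hT1 : 0 ≤ T a1 a1 := Finset.sum_nonneg fun j _ => mul_self_nonneg _
  have h4 : 4*(r a0 * q a0)*(r a1 * q a1) = (1 + T a0 a0)*(1 + T a1 a1) := by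
    have d0 := hdiag a0
    have d1 := hdiag a1
    nlinarith [d0, d1]
  have hsq : (r a0 * q a1 + r a1 * q a0)^2 = (T a0 a1)^2 := by rw [hcross]
  nlinarith [hsq, sq_nonneg (r a0 * q a1 - r a1 * q a0), h4, hTcs, hT0, hT1]
lemma Jb_u {s : ℕ} (x y : Vc s) (i : Fin s) : Jb x y (uI i) = 0 := rfl
lemma Jb_t {s : ℕ} (x y : Vc s) (i : Fin s) : Jb x y (tI i)
    = (∑ j, y (uI j) * x (uI j)) * x (uI i) - (∑ j, (x (uI j))^2) * y (uI i) := rfl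
lemma Jb_v {s : ℕ} (x y : Vc s) (i : Fin s) : Jb x y (vI i)
    = (2 * ∑ j, x (uI j) * x (tI j)) * y (uI i) + (∑ j, (x (uI j))^2) * y (tI i)
      - (∑ j, (y (uI j) * x (tI j) + y (tI j) * x (uI j))) * x (uI i)
      - (∑ j, y (uI j) * x (uI j)) * x (tI i) := rfl

/-- if `2 ≤ k ≤ s` and `X_1, …, X_k` is a spacelike orthonormal family
(`g(X_a,X_b) = δ_{ab}`), then the higher order Jacobi operator
`J(π) = J(X_1) + … + J(X_k)` satisfies `rank J(π) = 2s`, `rank J(π)² = s`, and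
`J(π)³ = 0`. -/
theorem stmt7 (s : ℕ) (hs : 2 ≤ s)
    (J : Vc s → Module.End ℝ (Vc s))
    (hJ : ∀ x y w : Vc s, gM s (J x y) w = RM s y x x w)
    (k : ℕ) (hk2 : 2 ≤ k) (hks : k ≤ s)
    (X : Fin k → Vc s)
    (hX : ∀ a b, gM s (X a) (X b) = if a = b then 1 else 0) :
    Module.finrank ℝ (LinearMap.range (∑ a, J (X a))) = 2 * s ∧
    Module.finrank ℝ (LinearMap.range ((∑ a, J (X a)) ^ 2)) = s ∧
    (∑ a, J (X a)) ^ 3 = 0 := by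
  classical
  have hJ' : ∀ x y, J x y = Jb x y := fun x y =>
    gM_cancel _ _ (fun w => (hJ x y w).trans (gJb x y w).symm)
  set F : Module.End ℝ (Vc s) := ∑ a, J (X a) with hF
  have hFapp : ∀ (y : Vc s) (idx : Ix s), F y idx = ∑ a, Jb (X a) y idx := by
    intro y idx
    rw [hF, LinearMap.sum_apply, Finset.sum_apply]
    exact Finset.sum_congr rfl fun a _ => by rw [hJ']
  have hFu : ∀ y i, F y (uI i) = 0 := by
    intro y i; rw [hFapp]; simp [Jb_u]
  have hFt : ∀ y i, F y (tI i)
      = ∑ a, ((∑ j, y (uI j) * X a (uI j)) * X a (uI i))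
        - (∑ a, ∑ j, (X a (uI j))^2) * y (uI i) := by
    intro y i; rw [hFapp]
    simp only [Jb_t]
    rw [Finset.sum_sub_distrib, ← Finset.sum_mul]
  have hFv0 : ∀ y, (∀ j, y (uI j) = 0) → ∀ i, F y (vI i)
      = (∑ a, ∑ j, (X a (uI j))^2) * y (tI i)
        - ∑ a, ((∑ j, y (tI j) * X a (uI j)) * X a (uI i)) := by
    intro y hy i; rw [hFapp]
    simp only [Jb_v, hy, mul_zero, zero_mul, zero_add, add_zero,
      Finset.sum_const_zero, sub_zero]
    rw [Finset.sum_sub_distrib, ← Finset.sum_mul]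
  have hF0 : ∀ y : Vc s, (∀ i, y (uI i) = 0) → (∀ i, y (tI i) = 0) → F y = 0 := by
    intro y hu ht
    funext idx
    show F y idx = 0
    rcases idx with i | i | i
    · exact hFu y i
    · rw [show (Sum.inr (Sum.inl i) : Ix s) = tI i from rfl, hFt]; simp [hu]
    · rw [show (Sum.inr (Sum.inr i) : Ix s) = vI i from rfl, hFv0 y hu]; simp [ht]
  have hMker : ∀ z : Fin s → ℝ,
      (∀ i, ∑ a, ((∑ j, z j * X a (uI j)) * X a (uI i))
        = (∑ a, ∑ j, (X a (uI j))^2) * z i) → z = 0 := by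
    intro z hz
    refine Mker hk2 (fun a j => X a (uI j)) (fun a j => X a (vI j))
      (fun a j => X a (tI j)) ?_ z hz
    intro a b
    simpa [gM] using hX a b
  have hkerF : ∀ y : Vc s, F y = 0 ↔ ((∀ i, y (uI i) = 0) ∧ ∀ i, y (tI i) = 0) := by
    intro y
    constructor
    · intro h0
      have hu : ∀ i, y (uI i) = 0 := by
        have hz : (fun j => y (uI j)) = 0 := by
          apply hMker
          intro i
          have h1 : F y (tI i) = 0 := by rw [h0]; rfl
          rw [hFt] at h1
          linarith
        intro i; exact congrFun hz i
      refine ⟨hu, ?_⟩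
      have hz : (fun j => y (tI j)) = 0 := by
        apply hMker
        intro i
        have h1 : F y (vI i) = 0 := by rw [h0]; rfl
        rw [hFv0 y hu] at h1
        linarith
      intro i; exact congrFun hz i
    · rintro ⟨hu, ht⟩; exact hF0 y hu ht
  -- projections
  set P1 : Vc s →ₗ[ℝ] (Fin s → ℝ) := LinearMap.funLeft ℝ ℝ uI with hP1
  set Pt : Vc s →ₗ[ℝ] (Fin s → ℝ) := LinearMap.funLeft ℝ ℝ tI with hPt
  set P : Vc s →ₗ[ℝ] (Fin s → ℝ) × (Fin s → ℝ) := P1.prod Pt with hP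
  have hdimV : Module.finrank ℝ (Vc s) = 3 * s := by
    rw [Module.finrank_pi]
    simp [Fintype.card_sum]
    ring
  have hdim2 : Module.finrank ℝ ((Fin s → ℝ) × (Fin s → ℝ)) = 2 * s := by
    rw [Module.finrank_prod, Module.finrank_pi]
    simp [Fintype.card_fin]
    ring
  have hdim1 : Module.finrank ℝ (Fin s → ℝ) = s := by
    rw [Module.finrank_pi]; simp
  have hPap : ∀ y : Vc s, P y = 0 ↔ ((∀ i, y (uI i) = 0) ∧ ∀ i, y (tI i) = 0) := by
    intro y
    constructor
    · intro h
      constructor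
      · intro i; exact congrFun (congrArg Prod.fst h) i
      · intro i; exact congrFun (congrArg Prod.snd h) i
    · rintro ⟨hu, ht⟩
      exact Prod.ext (funext fun i => hu i) (funext fun i => ht i)
  have hkerFP : LinearMap.ker F = LinearMap.ker P := by
    ext y
    rw [LinearMap.mem_ker, LinearMap.mem_ker, hkerF y, ← hPap y]
  have hPsurj : Function.Surjective P := by
    intro p
    refine ⟨Sum.elim p.1 (Sum.elim p.2 0), ?_⟩
    exact Prod.ext (funext fun i => rfl) (funext fun i => rfl)
  have hkerPdim : Module.finrank ℝ (LinearMap.ker P) = s := by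
    have h1 := LinearMap.finrank_range_add_finrank_ker P
    rw [LinearMap.range_eq_top.2 hPsurj, finrank_top, hdim2, hdimV] at h1
    omega
  have goal1 : Module.finrank ℝ (LinearMap.range F) = 2 * s := by
    have h1 := LinearMap.finrank_range_add_finrank_ker F
    rw [hkerFP, hkerPdim, hdimV] at h1
    omega
  -- F^2
  have hkerF2 : ∀ y : Vc s, F (F y) = 0 ↔ (∀ i, y (uI i) = 0) := by
    intro y
    constructor
    · intro h0
      have hw : ∀ i, (F y) (tI i) = 0 := by
        have hz : (fun j => (F y) (tI j)) = 0 := by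
          apply hMker
          intro i
          have h1 : F (F y) (vI i) = 0 := by rw [h0]; rfl
          rw [hFv0 (F y) (hFu y)] at h1
          linarith
        intro i; exact congrFun hz i
      have hz2 : (fun j => y (uI j)) = 0 := by
        apply hMker
        intro i
        have h1 := hw i
        rw [hFt] at h1
        linarith
      intro i; exact congrFun hz2 i
    · intro hu
      have htF : ∀ i, (F y) (tI i) = 0 := by
        intro i; rw [hFt]; simp [hu]
      exact hF0 (F y) (hFu y) htF
  have hkerF2P : LinearMap.ker (F ^ 2) = LinearMap.ker P1 := by
    ext y
    rw [LinearMap.mem_ker, LinearMap.mem_ker]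
    have e : (F ^ 2) y = F (F y) := by rw [sq]; rfl
    rw [e, hkerF2 y]
    constructor
    · intro h; exact funext fun i => h i
    · intro h i; exact congrFun h i
  have hP1surj : Function.Surjective P1 :=
    LinearMap.funLeft_surjective_of_injective ℝ ℝ uI
      (fun a b hab => Sum.inl_injective hab)
  have hkerP1dim : Module.finrank ℝ (LinearMap.ker P1) = 2 * s := by
    have h1 := LinearMap.finrank_range_add_finrank_ker P1
    rw [LinearMap.range_eq_top.2 hP1surj, finrank_top, hdim1, hdimV] at h1
    omega
  have goal2 : Module.finrank ℝ (LinearMap.range (F ^ 2)) = s := by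
    have h1 := LinearMap.finrank_range_add_finrank_ker (F ^ 2)
    rw [hkerF2P, hkerP1dim, hdimV] at h1
    omega
  have goal3 : F ^ 3 = 0 := by
    apply LinearMap.ext
    intro y
    have e : (F ^ 3) y = F (F (F y)) := by
      rw [pow_succ, pow_succ, pow_one]; rfl
    rw [e, LinearMap.zero_apply]
    refine hF0 (F (F y)) (hFu (F y)) (fun i => ?_)
    rw [hFt]
    simp [hFu y]
  exact ⟨goal1, goal2, goal3⟩
end
end

section
/- The model space is k-spacelike higher order Jordan Osserman for 2 ≤ k ≤ s: if X_1, …, X_k and Y_1, …, Y_k are two families in ℝ^{3s} with g(X_a, X_b) = δ_{ab} and g(Y_a, Y_b) = δ_{ab} for 1 ≤ a, b ≤ k, then the operators J(X_1) + … + J(X_k) and J(Y_1) + … + J(Y_k) are similar, i.e. conjugate by an invertible linear map of ℝ^{3s}. -/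
open scoped BigOperators

noncomputable section

/- In the theorems below, the Jacobi operator is taken as a function
`J : ℝ^{3s} → End(ℝ^{3s})` together with the hypothesis that it satisfies its defining
property `g(J(x)y, w) = R(y,x,x,w)` for all `x, y, w`; since `g` is nondegenerate this
characterizes `J` uniquely. -/

namespace Osser

@[simp] lemma Uv_u {s : ℕ} (m i : Fin s) : Uv m (uI i) = if i = m then 1 else 0 := by
  simp [Uv, uI, Pi.single_apply, eq_comm]
@[simp] lemma Uv_t {s : ℕ} (m i : Fin s) : Uv m (tI i) = 0 := by simp [Uv, uI, tI, Pi.single_apply]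
@[simp] lemma Uv_v {s : ℕ} (m i : Fin s) : Uv m (vI i) = 0 := by simp [Uv, uI, vI, Pi.single_apply]
@[simp] lemma Tv_u {s : ℕ} (m i : Fin s) : Tv m (uI i) = 0 := by simp [Tv, uI, tI, Pi.single_apply]
@[simp] lemma Tv_t {s : ℕ} (m i : Fin s) : Tv m (tI i) = if i = m then 1 else 0 := by
  simp [Tv, tI, Pi.single_apply, eq_comm]
@[simp] lemma Tv_v {s : ℕ} (m i : Fin s) : Tv m (vI i) = 0 := by simp [Tv, vI, tI, Pi.single_apply]
@[simp] lemma Vv_u {s : ℕ} (m i : Fin s) : Vv m (uI i) = 0 := by simp [Vv, uI, vI, Pi.single_apply]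
@[simp] lemma Vv_t {s : ℕ} (m i : Fin s) : Vv m (tI i) = 0 := by simp [Vv, tI, vI, Pi.single_apply]
@[simp] lemma Vv_v {s : ℕ} (m i : Fin s) : Vv m (vI i) = if i = m then 1 else 0 := by
  simp [Vv, vI, Pi.single_apply, eq_comm]

lemma gM_Uv {s : ℕ} (z : Vc s) (m : Fin s) : gM s z (Uv m) = z (vI m) := by
  simp [gM, mul_ite, Finset.sum_ite_eq']
lemma gM_Tv {s : ℕ} (z : Vc s) (m : Fin s) : gM s z (Tv m) = - z (tI m) := by
  simp [gM, mul_ite, Finset.sum_ite_eq']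
lemma gM_Vv {s : ℕ} (z : Vc s) (m : Fin s) : gM s z (Vv m) = z (uI m) := by
  simp [gM, mul_ite, Finset.sum_ite_eq']

lemma RM_Vv {s : ℕ} (y x : Vc s) (m : Fin s) : RM s y x x (Vv m) = 0 := by
  simp [RM]
lemma RM_Tv {s : ℕ} (y x : Vc s) (m : Fin s) :
    RM s y x x (Tv m) = y (uI m) * (∑ j, x (uI j) * x (uI j)) - x (uI m) * ∑ j, x (uI j) * y (uI j) := by
  simp [RM, mul_ite, Finset.sum_ite_eq', Finset.sum_sub_distrib, Finset.mul_sum]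
  ring_nf
  congr 1 <;> (apply Finset.sum_congr rfl; intros; ring)
lemma RM_Uv {s : ℕ} (y x : Vc s) (m : Fin s) :
    RM s y x x (Uv m) =
      - x (uI m) * (∑ i, x (tI i) * y (uI i))
      + 2 * (∑ i, x (uI i) * x (tI i)) * y (uI m)
      - x (uI m) * (∑ i, x (uI i) * y (tI i))
      - x (tI m) * (∑ i, x (uI i) * y (uI i))
      + (∑ i, x (uI i) * x (uI i)) * y (tI m) := by
  simp [RM, mul_ite, ite_mul, Finset.sum_ite_eq', Finset.sum_ite_eq, Finset.sum_add_distrib,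
    Finset.sum_sub_distrib]
  simp only [Finset.mul_sum, Finset.sum_mul, ← Finset.sum_neg_distrib, ← Finset.sum_sub_distrib,
    ← Finset.sum_add_distrib]
  exact Finset.sum_congr rfl (by intros; ring)

/-! ### dot product on `Fin s → ℝ` -/

def dotR {n : ℕ} (a b : Fin n → ℝ) : ℝ := ∑ i, a i * b i

lemma dotR_add {n : ℕ} (a b c : Fin n → ℝ) : dotR a (b + c) = dotR a b + dotR a c := by
  simp [dotR, mul_add, Finset.sum_add_distrib]
lemma dotR_smul {n : ℕ} (r : ℝ) (a b : Fin n → ℝ) : dotR a (r • b) = r * dotR a b := by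
  simp [dotR, Finset.mul_sum]; exact Finset.sum_congr rfl (by intros; ring)
lemma dotR_neg {n : ℕ} (a b : Fin n → ℝ) : dotR a (-b) = - dotR a b := by
  simp [dotR]
lemma dotR_comm {n : ℕ} (a b : Fin n → ℝ) : dotR a b = dotR b a := by
  simp [dotR, mul_comm]
lemma dotR_self_nonneg {n : ℕ} (a : Fin n → ℝ) : 0 ≤ dotR a a :=
  Finset.sum_nonneg fun i _ => mul_self_nonneg (a i)
lemma dotR_self_pos {n : ℕ} {a : Fin n → ℝ} (ha : a ≠ 0) : 0 < dotR a a := by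
  obtain ⟨i, hi⟩ := Function.ne_iff.mp ha
  exact Finset.sum_pos' (fun j _ => mul_self_nonneg (a j))
    ⟨i, Finset.mem_univ i, mul_self_pos.mpr hi⟩
lemma dotR_self_eq_zero {n : ℕ} {a : Fin n → ℝ} (h : dotR a a = 0) : a = 0 := by
  by_contra hne
  exact absurd h (ne_of_gt (dotR_self_pos hne))
lemma dotR_cs {n : ℕ} (a b : Fin n → ℝ) : (dotR a b) ^ 2 ≤ dotR a a * dotR b b := by
  have := Finset.sum_mul_sq_le_sq_mul_sq Finset.univ a b
  simpa [dotR, sq] using this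
lemma dotR_cs_eq {n : ℕ} {a b : Fin n → ℝ} (h : (dotR a b) ^ 2 = dotR a a * dotR b b) :
    (dotR a a) • b = (dotR a b) • a := by
  set c := dotR a a with hc
  set d := dotR a b with hd
  set w : Fin n → ℝ := c • b - d • a with hw
  have hexp : dotR w w = c * c * dotR b b - 2 * (c * (d * dotR a b)) + d * d * dotR a a := by
    simp only [hw, dotR, Pi.sub_apply, Pi.smul_apply, smul_eq_mul, Finset.mul_sum,
      ← Finset.sum_sub_distrib, ← Finset.sum_add_distrib]
    exact Finset.sum_congr rfl (by intros; ring)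
  have : dotR w w = 0 := by
    rw [hexp, ← hc, ← hd]
    linear_combination (-c) * h
  have := dotR_self_eq_zero this
  have : (dotR a a) • b - (dotR a b) • a = 0 := this
  linear_combination (norm := module) this


/-! ### Jacobi operator components -/

section Jac
variable {s : ℕ} {J : Vc s → Module.End ℝ (Vc s)}

lemma J_u (hJ : ∀ x y w : Vc s, gM s (J x y) w = RM s y x x w) (x y : Vc s) (m : Fin s) :
    J x y (uI m) = 0 := by
  have := hJ x y (Vv m)
  rwa [gM_Vv, RM_Vv] at this

lemma J_t (hJ : ∀ x y w : Vc s, gM s (J x y) w = RM s y x x w) (x y : Vc s) (m : Fin s) :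
    J x y (tI m) = dotR (fun i => x (uI i)) (fun i => y (uI i)) * x (uI m)
      - dotR (fun i => x (uI i)) (fun i => x (uI i)) * y (uI m) := by
  have := hJ x y (Tv m)
  rw [gM_Tv, RM_Tv] at this
  have h2 : J x y (tI m) = x (uI m) * (∑ j, x (uI j) * y (uI j))
      - y (uI m) * ∑ j, x (uI j) * x (uI j) := by linarith
  rw [h2]; simp [dotR]; ring

lemma J_v (hJ : ∀ x y w : Vc s, gM s (J x y) w = RM s y x x w) (x y : Vc s) (m : Fin s) :
    J x y (vI m) =
      (2 * dotR (fun i => x (uI i)) (fun i => x (tI i)) * y (uI m)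
        - dotR (fun i => x (tI i)) (fun i => y (uI i)) * x (uI m)
        - dotR (fun i => x (uI i)) (fun i => y (uI i)) * x (tI m))
      - (dotR (fun i => x (uI i)) (fun i => y (tI i)) * x (uI m)
        - dotR (fun i => x (uI i)) (fun i => x (uI i)) * y (tI m)) := by
  have := hJ x y (Uv m)
  rw [gM_Uv, RM_Uv] at this
  rw [this]; simp [dotR]; ring

end Jac

/-! ### The operators S, M and the conjugating map -/

section Fam
variable {s k : ℕ}

/-- u-part of `X α`. -/
def aF (X : Fin k → Vc s) (α : Fin k) : Fin s → ℝ := fun i => X α (uI i)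
/-- t-part of `X α`. -/
def bF (X : Fin k → Vc s) (α : Fin k) : Fin s → ℝ := fun i => X α (tI i)

def Sfun (X : Fin k → Vc s) (u : Fin s → ℝ) : Fin s → ℝ := fun m =>
  ∑ α, (dotR (aF X α) u * aF X α m - dotR (aF X α) (aF X α) * u m)

def Mfun (X : Fin k → Vc s) (u : Fin s → ℝ) : Fin s → ℝ := fun m =>
  ∑ α, (2 * dotR (aF X α) (bF X α) * u m - dotR (bF X α) u * aF X α m
        - dotR (aF X α) u * bF X α m)

lemma Sfun_add (X : Fin k → Vc s) (u v : Fin s → ℝ) :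
    Sfun X (u + v) = Sfun X u + Sfun X v := by
  funext m
  simp only [Sfun, Pi.add_apply, dotR_add, ← Finset.sum_add_distrib]
  exact Finset.sum_congr rfl (by intros; ring)

lemma Sfun_smul (X : Fin k → Vc s) (r : ℝ) (u : Fin s → ℝ) :
    Sfun X (r • u) = r • Sfun X u := by
  funext m
  simp only [Sfun, Pi.smul_apply, dotR_smul, smul_eq_mul, Finset.mul_sum]
  exact Finset.sum_congr rfl (by intros; ring)

lemma Sfun_neg (X : Fin k → Vc s) (u : Fin s → ℝ) : Sfun X (-u) = - Sfun X u := by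
  have := Sfun_smul X (-1) u
  simpa using this

lemma Mfun_add (X : Fin k → Vc s) (u v : Fin s → ℝ) :
    Mfun X (u + v) = Mfun X u + Mfun X v := by
  funext m
  simp only [Mfun, Pi.add_apply, dotR_add, ← Finset.sum_add_distrib]
  exact Finset.sum_congr rfl (by intros; ring)

lemma Mfun_smul (X : Fin k → Vc s) (r : ℝ) (u : Fin s → ℝ) :
    Mfun X (r • u) = r • Mfun X u := by
  funext m
  simp only [Mfun, Pi.smul_apply, dotR_smul, smul_eq_mul, Finset.mul_sum]
  exact Finset.sum_congr rfl (by intros; ring)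

lemma dot_Sfun (X : Fin k → Vc s) (u : Fin s → ℝ) :
    dotR (Sfun X u) u = ∑ α, (dotR (aF X α) u ^ 2 - dotR (aF X α) (aF X α) * dotR u u) := by
  rw [show dotR (Sfun X u) u
      = ∑ m, (∑ α, (dotR (aF X α) u * aF X α m - dotR (aF X α) (aF X α) * u m)) * u m from rfl]
  simp only [Finset.sum_mul]
  rw [Finset.sum_comm]
  refine Finset.sum_congr rfl fun α _ => ?_
  simp only [sub_mul, Finset.sum_sub_distrib, mul_assoc, ← Finset.mul_sum]
  rw [show (∑ x, aF X α x * u x) = dotR (aF X α) u from rfl,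
    show (∑ x, u x * u x) = dotR u u from rfl]
  ring

end Fam

/-! ### Component formulas for the summed Jacobi operator -/

section Acomp
variable {s k : ℕ} {J : Vc s → Module.End ℝ (Vc s)}

lemma A_u (hJ : ∀ x y w : Vc s, gM s (J x y) w = RM s y x x w)
    (X : Fin k → Vc s) (y : Vc s) (m : Fin s) :
    (∑ α, J (X α)) y (uI m) = 0 := by
  rw [LinearMap.sum_apply, Finset.sum_apply]
  simp [J_u hJ]

lemma A_t (hJ : ∀ x y w : Vc s, gM s (J x y) w = RM s y x x w)
    (X : Fin k → Vc s) (y : Vc s) (m : Fin s) :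
    (∑ α, J (X α)) y (tI m) = Sfun X (fun i => y (uI i)) m := by
  rw [LinearMap.sum_apply, Finset.sum_apply, Sfun]
  exact Finset.sum_congr rfl fun α _ => J_t hJ (X α) y m

lemma A_v (hJ : ∀ x y w : Vc s, gM s (J x y) w = RM s y x x w)
    (X : Fin k → Vc s) (y : Vc s) (m : Fin s) :
    (∑ α, J (X α)) y (vI m)
      = Mfun X (fun i => y (uI i)) m - Sfun X (fun i => y (tI i)) m := by
  rw [LinearMap.sum_apply, Finset.sum_apply, Mfun, Sfun, ← Finset.sum_sub_distrib]
  exact Finset.sum_congr rfl fun α _ => J_v hJ (X α) y m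

end Acomp

/-! ### The conjugating linear maps -/

section Conj
variable {s k : ℕ}

/-- The reference nilpotent operator. -/
def Nmap (s : ℕ) : Module.End ℝ (Vc s) where
  toFun y := Sum.elim (fun _ => 0) (Sum.elim (fun i => y (uI i)) (fun i => - y (tI i)))
  map_add' y z := by funext idx; rcases idx with i | i | i <;> simp [uI, tI] <;> ring
  map_smul' r y := by funext idx; rcases idx with i | i | i <;> simp [uI, tI] <;> ring

@[simp] lemma Nmap_u (y : Vc s) (i : Fin s) : Nmap s y (uI i) = 0 := rfl
@[simp] lemma Nmap_t (y : Vc s) (i : Fin s) : Nmap s y (tI i) = y (uI i) := rfl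
@[simp] lemma Nmap_v (y : Vc s) (i : Fin s) : Nmap s y (vI i) = - y (tI i) := rfl

/-- The conjugating map `P(u,t,v) = (u, S t, S² v + M t)`. -/
def Pmap (X : Fin k → Vc s) : Module.End ℝ (Vc s) where
  toFun y := Sum.elim (fun i => y (uI i))
    (Sum.elim (fun i => Sfun X (fun j => y (tI j)) i)
      (fun i => Sfun X (Sfun X (fun j => y (vI j))) i + Mfun X (fun j => y (tI j)) i))
  map_add' y z := by
    have ht : (fun j => (y + z) (tI j)) = (fun j => y (tI j)) + (fun j => z (tI j)) := rfl
    have hv : (fun j => (y + z) (vI j)) = (fun j => y (vI j)) + (fun j => z (vI j)) := rfl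
    funext idx; rcases idx with i | i | i
    · rfl
    · show Sfun X (fun j => (y + z) (tI j)) i = _
      rw [ht, Sfun_add]; rfl
    · show Sfun X (Sfun X (fun j => (y + z) (vI j))) i + Mfun X (fun j => (y + z) (tI j)) i = _
      rw [ht, hv, Sfun_add, Sfun_add, Mfun_add]
      simp only [Pi.add_apply, Sum.elim_inr]
      ring
  map_smul' r y := by
    have ht : (fun j => (r • y) (tI j)) = r • (fun j => y (tI j)) := rfl
    have hv : (fun j => (r • y) (vI j)) = r • (fun j => y (vI j)) := rfl
    funext idx; rcases idx with i | i | i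
    · rfl
    · show Sfun X (fun j => (r • y) (tI j)) i = _
      rw [ht, Sfun_smul]; rfl
    · show Sfun X (Sfun X (fun j => (r • y) (vI j))) i + Mfun X (fun j => (r • y) (tI j)) i = _
      rw [ht, hv, Sfun_smul, Sfun_smul, Mfun_smul]
      show r * _ + r * _ = r * (_ + _)
      ring

@[simp] lemma Pmap_u (X : Fin k → Vc s) (y : Vc s) (i : Fin s) :
    Pmap X y (uI i) = y (uI i) := rfl
@[simp] lemma Pmap_t (X : Fin k → Vc s) (y : Vc s) (i : Fin s) :
    Pmap X y (tI i) = Sfun X (fun j => y (tI j)) i := rfl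
@[simp] lemma Pmap_v (X : Fin k → Vc s) (y : Vc s) (i : Fin s) :
    Pmap X y (vI i) = Sfun X (Sfun X (fun j => y (vI j))) i + Mfun X (fun j => y (tI j)) i := rfl

/-- The key intertwining identity `A ∘ P = P ∘ N`. -/
lemma conj_eq {J : Vc s → Module.End ℝ (Vc s)}
    (hJ : ∀ x y w : Vc s, gM s (J x y) w = RM s y x x w)
    (X : Fin k → Vc s) (y : Vc s) :
    (∑ α, J (X α)) (Pmap X y) = Pmap X (Nmap s y) := by
  funext idx; rcases idx with i | i | i
  · show (∑ α, J (X α)) (Pmap X y) (uI i) = Pmap X (Nmap s y) (uI i)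
    rw [A_u hJ, Pmap_u, Nmap_u]
  · show (∑ α, J (X α)) (Pmap X y) (tI i) = Pmap X (Nmap s y) (tI i)
    rw [A_t hJ, Pmap_t]
    simp only [Pmap_u, Nmap_t]
  · show (∑ α, J (X α)) (Pmap X y) (vI i) = Pmap X (Nmap s y) (vI i)
    rw [A_v hJ, Pmap_v]
    simp only [Pmap_u, Pmap_t, Nmap_t, Nmap_v]
    have : (fun j => - y (tI j)) = - (fun j => y (tI j)) := rfl
    rw [this, Sfun_neg, Sfun_neg]
    show Mfun X (fun i => y (uI i)) i - Sfun X (Sfun X (fun j => y (tI j))) i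
      = (- Sfun X (Sfun X fun j => y (tI j))) i + Mfun X (fun j => y (uI j)) i
    simp [sub_eq_neg_add]

end Conj

/-! ### Consequences of spacelike orthonormality -/

section Ortho
variable {s k : ℕ}

lemma gM_dot (x y : Vc s) :
    gM s x y = dotR (fun i => x (uI i)) (fun i => y (vI i))
      + dotR (fun i => x (vI i)) (fun i => y (uI i))
      - dotR (fun i => x (tI i)) (fun i => y (tI i)) := by
  simp [gM, dotR, Finset.sum_add_distrib, Finset.sum_sub_distrib]

lemma dotR_smul_left {n : ℕ} (r : ℝ) (a b : Fin n → ℝ) : dotR (r • a) b = r * dotR a b := by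
  rw [dotR_comm, dotR_smul, dotR_comm]

lemma aF_ne (X : Fin k → Vc s) (α : Fin k) (hXd : gM s (X α) (X α) = 1) : aF X α ≠ 0 := by
  intro h0
  rw [gM_dot] at hXd
  have h1 : (fun i => X α (uI i)) = (0 : Fin s → ℝ) := h0
  rw [h1] at hXd
  have h2 : dotR (0 : Fin s → ℝ) (fun i => X α (vI i)) = 0 := by simp [dotR]
  have h3 : dotR (fun i => X α (vI i)) (0 : Fin s → ℝ) = 0 := by simp [dotR]
  rw [h2, h3] at hXd
  nlinarith [dotR_self_nonneg (fun i => X α (tI i))]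

lemma not_all_parallel (hk2 : 2 ≤ k) (X : Fin k → Vc s)
    (hX : ∀ a b, gM s (X a) (X b) = if a = b then 1 else 0)
    (u : Fin s → ℝ) (hu : u ≠ 0)
    (hpar : ∀ α, (dotR (aF X α) (aF X α)) • u = (dotR (aF X α) u) • (aF X α)) : False := by
  have hane : ∀ α, aF X α ≠ 0 := fun α => aF_ne X α (by simpa using hX α α)
  have hapos : ∀ α, 0 < dotR (aF X α) (aF X α) := fun α => dotR_self_pos (hane α)
  -- each aF X α is a nonzero multiple of u
  have hc : ∀ α, ∃ c : ℝ, c ≠ 0 ∧ aF X α = c • u := by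
    intro α
    have hd : dotR (aF X α) u ≠ 0 := by
      intro h0
      have hp := hpar α
      rw [h0, zero_smul] at hp
      rcases smul_eq_zero.mp hp with h | h
      · exact absurd h (ne_of_gt (hapos α))
      · exact hu h
    refine ⟨dotR (aF X α) (aF X α) / dotR (aF X α) u, div_ne_zero (ne_of_gt (hapos α)) hd, ?_⟩
    have := hpar α
    funext i
    have hi := congrFun this i
    simp only [Pi.smul_apply, smul_eq_mul] at hi ⊢
    field_simp
    linarith [hi]
  obtain ⟨c0, hc0, ha0⟩ := hc ⟨0, by omega⟩
  obtain ⟨c1, hc1, ha1⟩ := hc ⟨1, by omega⟩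
  set α0 : Fin k := ⟨0, by omega⟩
  set α1 : Fin k := ⟨1, by omega⟩
  have hne : α0 ≠ α1 := by simp [α0, α1, Fin.ext_iff]
  -- abbreviations
  set w0 : Fin s → ℝ := fun i => X α0 (vI i)
  set w1 : Fin s → ℝ := fun i => X α1 (vI i)
  set t0 : Fin s → ℝ := fun i => X α0 (tI i)
  set t1 : Fin s → ℝ := fun i => X α1 (tI i)
  have h00 : 2 * (c0 * dotR u w0) - dotR t0 t0 = 1 := by
    have := hX α0 α0
    rw [if_pos rfl, gM_dot] at this
    have ha : (fun i => X α0 (uI i)) = c0 • u := ha0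
    rw [ha] at this
    rw [dotR_smul_left, dotR_smul] at this
    rw [dotR_comm u w0] at *
    linarith [this]
  have h11 : 2 * (c1 * dotR u w1) - dotR t1 t1 = 1 := by
    have := hX α1 α1
    rw [if_pos rfl, gM_dot] at this
    have ha : (fun i => X α1 (uI i)) = c1 • u := ha1
    rw [ha] at this
    rw [dotR_smul_left, dotR_smul] at this
    rw [dotR_comm u w1] at *
    linarith [this]
  have h01 : c0 * dotR u w1 + c1 * dotR u w0 - dotR t0 t1 = 0 := by
    have := hX α0 α1
    rw [if_neg hne, gM_dot] at this
    have ha : (fun i => X α0 (uI i)) = c0 • u := ha0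
    have hb : (fun i => X α1 (uI i)) = c1 • u := ha1
    rw [ha, hb] at this
    rw [dotR_smul_left, dotR_smul] at this
    rw [dotR_comm u w0, dotR_comm u w1] at *
    linarith [this]
  have hcs := dotR_cs t0 t1
  have hT0 := dotR_self_nonneg t0
  have hT1 := dotR_self_nonneg t1
  have e0 : dotR t0 t0 = 2 * (c0 * dotR u w0) - 1 := by linarith
  have e1 : dotR t1 t1 = 2 * (c1 * dotR u w1) - 1 := by linarith
  have e01 : dotR t0 t1 = c0 * dotR u w1 + c1 * dotR u w0 := by linarith
  rw [e0, e1, e01] at hcs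
  rw [e0] at hT0
  rw [e1] at hT1
  nlinarith [hcs, hT0, hT1, sq_nonneg (c0 * dotR u w1 - c1 * dotR u w0)]

lemma Sfun_dot_neg (hk2 : 2 ≤ k) (X : Fin k → Vc s)
    (hX : ∀ a b, gM s (X a) (X b) = if a = b then 1 else 0)
    {u : Fin s → ℝ} (hu : u ≠ 0) : dotR (Sfun X u) u < 0 := by
  rw [dot_Sfun]
  have hle : ∀ α ∈ Finset.univ, dotR (aF X α) u ^ 2 - dotR (aF X α) (aF X α) * dotR u u
      ≤ (fun _ : Fin k => (0:ℝ)) α := by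
    intro α _
    simp only [sub_nonpos]
    exact dotR_cs (aF X α) u
  have hex : ∃ α ∈ Finset.univ, dotR (aF X α) u ^ 2 - dotR (aF X α) (aF X α) * dotR u u
      < (fun _ : Fin k => (0:ℝ)) α := by
    by_contra hno
    push_neg at hno
    have hall : ∀ α, (dotR (aF X α) (aF X α)) • u = (dotR (aF X α) u) • (aF X α) := by
      intro α
      have h1 := hno α (Finset.mem_univ α)
      have h2 := dotR_cs (aF X α) u
      have heq : dotR (aF X α) u ^ 2 = dotR (aF X α) (aF X α) * dotR u u := by
        linarith
      exact dotR_cs_eq heq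
    exact not_all_parallel hk2 X hX u hu hall
  have := Finset.sum_lt_sum hle hex
  simpa using this

lemma Sfun_eq_zero (hk2 : 2 ≤ k) (X : Fin k → Vc s)
    (hX : ∀ a b, gM s (X a) (X b) = if a = b then 1 else 0)
    {w : Fin s → ℝ} (h : Sfun X w = 0) : w = 0 := by
  by_contra hw
  have hlt := Sfun_dot_neg hk2 X hX hw
  rw [h] at hlt
  simp [dotR] at hlt

lemma Sfun_zero (X : Fin k → Vc s) : Sfun X (0 : Fin s → ℝ) = 0 := by
  have := Sfun_smul X 0 0
  simpa using this

lemma Mfun_zero (X : Fin k → Vc s) : Mfun X (0 : Fin s → ℝ) = 0 := by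
  have := Mfun_smul X 0 0
  simpa using this

lemma Pmap_inj (hk2 : 2 ≤ k) (X : Fin k → Vc s)
    (hX : ∀ a b, gM s (X a) (X b) = if a = b then 1 else 0) :
    Function.Injective (Pmap X) := by
  rw [← LinearMap.ker_eq_bot]
  rw [LinearMap.ker_eq_bot']
  intro y hy
  have hu : ∀ i, y (uI i) = 0 := fun i => by
    have := congrFun hy (uI i); simpa using this
  have htf : Sfun X (fun j => y (tI j)) = 0 := by
    funext i
    have := congrFun hy (tI i); simpa using this
  have ht : (fun j => y (tI j)) = 0 := Sfun_eq_zero hk2 X hX htf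
  have hvf : Sfun X (Sfun X (fun j => y (vI j))) = 0 := by
    funext i
    have h := congrFun hy (vI i)
    simp only [Pmap_v, Pi.zero_apply] at h
    rw [ht, Mfun_zero] at h
    simpa using h
  have hv : (fun j => y (vI j)) = 0 :=
    Sfun_eq_zero hk2 X hX (Sfun_eq_zero hk2 X hX hvf)
  funext idx
  rcases idx with i | i | i
  · exact hu i
  · exact congrFun ht i
  · exact congrFun hv i

/-- The conjugating map as a linear equivalence. -/
def Pequiv (hk2 : 2 ≤ k) (X : Fin k → Vc s)
    (hX : ∀ a b, gM s (X a) (X b) = if a = b then 1 else 0) : Vc s ≃ₗ[ℝ] Vc s :=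
  LinearEquiv.ofBijective (Pmap X)
    ⟨Pmap_inj hk2 X hX, (LinearMap.injective_iff_surjective).mp (Pmap_inj hk2 X hX)⟩

lemma exists_intertwine (hk2 : 2 ≤ k) {J : Vc s → Module.End ℝ (Vc s)}
    (hJ : ∀ x y w : Vc s, gM s (J x y) w = RM s y x x w)
    (X : Fin k → Vc s)
    (hX : ∀ a b, gM s (X a) (X b) = if a = b then 1 else 0) :
    ∃ E : Vc s ≃ₗ[ℝ] Vc s, ∀ y, (∑ α, J (X α)) (E y) = E (Nmap s y) :=
  ⟨Pequiv hk2 X hX, fun y => conj_eq hJ X y⟩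

end Ortho
end Osser

/-- the model space is `k`-spacelike higher order Jordan Osserman for
`2 ≤ k ≤ s`: for any two spacelike orthonormal `k`-families `X` and `Y`, the
operators `Σ_a J(X_a)` and `Σ_a J(Y_a)` are similar. -/
theorem stmt8 (s : ℕ) (hs : 2 ≤ s)
    (J : Vc s → Module.End ℝ (Vc s))
    (hJ : ∀ x y w : Vc s, gM s (J x y) w = RM s y x x w)
    (k : ℕ) (hk2 : 2 ≤ k) (hks : k ≤ s)
    (X Y : Fin k → Vc s)
    (hX : ∀ a b, gM s (X a) (X b) = if a = b then 1 else 0)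
    (hY : ∀ a b, gM s (Y a) (Y b) = if a = b then 1 else 0) :
    ∃ P : Vc s ≃ₗ[ℝ] Vc s, ∀ y : Vc s,
      (∑ a, J (Y a)) y = P ((∑ a, J (X a)) (P.symm y)) := by
  obtain ⟨EX, hEX⟩ := Osser.exists_intertwine hk2 hJ X hX
  obtain ⟨EY, hEY⟩ := Osser.exists_intertwine hk2 hJ Y hY
  refine ⟨EX.symm.trans EY, fun y => ?_⟩
  have hsymm : (EX.symm.trans EY).symm y = EX (EY.symm y) := rfl
  rw [hsymm]
  rw [hEX (EY.symm y)]
  have h2 := hEY (EY.symm y)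
  rw [LinearEquiv.apply_symm_apply] at h2
  rw [h2]
  simp [LinearEquiv.trans_apply]
end
end

section
/- Let s + 2 ≤ k ≤ 2s and let X_1, …, X_k ∈ ℝ^{3s} satisfy g(X_a, X_b) = −δ_{ab} for 1 ≤ a, b ≤ k (a timelike orthonormal k-family). Then the higher order Jacobi operator J(π) := J(X_1) + … + J(X_k) satisfies rank J(π) = 2s, rank J(π)² = s, and J(π)³ = 0. -/
open scoped BigOperators

noncomputable section

/- In the theorems below, the Jacobi operator is taken as a function
`J : ℝ^{3s} → End(ℝ^{3s})` together with the hypothesis that it satisfies its defining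
property `g(J(x)y, w) = R(y,x,x,w)` for all `x, y, w`; since `g` is nondegenerate this
characterizes `J` uniquely. -/

section Aux
variable {s : ℕ}

lemma gM_apply_Uv (z : Vc s) (m : Fin s) : gM s z (Uv m) = z (vI m) := by
  simp [gM, Uv, Pi.single_apply, uI, tI, vI]
lemma gM_apply_Tv (z : Vc s) (m : Fin s) : gM s z (Tv m) = - z (tI m) := by
  simp [gM, Tv, Pi.single_apply, uI, tI, vI]
lemma gM_apply_Vv (z : Vc s) (m : Fin s) : gM s z (Vv m) = z (uI m) := by
  simp [gM, Vv, Pi.single_apply, uI, tI, vI]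

lemma RM_apply_Vv (x y : Vc s) (m : Fin s) : RM s y x x (Vv m) = 0 := by
  simp [RM, Vv, Pi.single_apply, uI, tI, vI]

lemma RM_apply_Tv (x y : Vc s) (m : Fin s) :
    RM s y x x (Tv m) =
      (∑ j, x (uI j) ^ 2) * y (uI m) - (∑ j, x (uI j) * y (uI j)) * x (uI m) := by
  simp only [RM, Tv, Pi.single_apply, uI, tI, vI, Sum.inr.injEq, Sum.inl.injEq,
    reduceCtorEq, if_false, mul_zero, zero_mul, mul_ite, ite_mul, mul_one, one_mul,
    sub_zero, zero_sub, add_zero, zero_add, neg_zero, mul_neg, neg_neg]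
  rw [Finset.sum_comm]
  simp only [Finset.sum_sub_distrib, Finset.sum_ite_eq', Finset.mem_univ, if_true,
    Finset.sum_mul]
  congr 1 <;> exact Finset.sum_congr rfl (fun j _ => by ring)
end Aux
section Aux2
variable {s : ℕ}
lemma RM_apply_Uv (x y : Vc s) (m : Fin s) :
    RM s y x x (Uv m) =
      (2 * ∑ j, x (uI j) * x (tI j)) * y (uI m)
      - (∑ j, (x (tI j) * y (uI j) + y (tI j) * x (uI j))) * x (uI m)
      - (∑ j, x (uI j) * y (uI j)) * x (tI m)
      + (∑ j, x (uI j) ^ 2) * y (tI m) := by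
  simp only [RM, Uv, Pi.single_apply, uI, tI, vI, Sum.inr.injEq, Sum.inl.injEq,
    reduceCtorEq, if_false, mul_zero, zero_mul, mul_ite, ite_mul, mul_one, one_mul,
    sub_zero, zero_sub, add_zero, zero_add, neg_zero, mul_neg, neg_neg]
  simp only [Finset.sum_add_distrib, Finset.sum_sub_distrib, Finset.sum_neg_distrib,
    Finset.sum_ite_irrel, Finset.sum_const_zero, Finset.sum_ite_eq', Finset.mem_univ,
    if_true, Finset.mul_sum, Finset.sum_mul]
  simp only [Finset.mul_sum, Finset.sum_mul, ← Finset.sum_add_distrib, ← Finset.sum_sub_distrib, ← Finset.sum_neg_distrib]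
  exact Finset.sum_congr rfl fun i _ => by ring
end Aux2
section Mat
open Module

def Mmat {s k : ℕ} (X : Fin k → Vc s) : Matrix (Fin s) (Fin s) ℝ :=
  Matrix.of fun i j =>
    (∑ a, X a (uI i) * X a (uI j)) - if i = j then (∑ a, ∑ l, X a (uI l) ^ 2) else 0

def Nmat {s k : ℕ} (X : Fin k → Vc s) : Matrix (Fin s) (Fin s) ℝ :=
  Matrix.of fun i j =>
    (if i = j then 2 * ∑ a, ∑ l, X a (uI l) * X a (tI l) else 0)
      - ∑ a, (X a (uI i) * X a (tI j) + X a (tI i) * X a (uI j))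

lemma Mmat_mulVec {s k : ℕ} (X : Fin k → Vc s) (q : Fin s → ℝ) (i : Fin s) :
    (Mmat X).mulVec q i
      = (∑ a, (∑ j, X a (uI j) * q j) * X a (uI i))
        - (∑ a, ∑ l, X a (uI l) ^ 2) * q i := by
  simp only [Matrix.mulVec, dotProduct, Mmat, Matrix.of_apply, sub_mul, ite_mul,
    zero_mul, Finset.sum_sub_distrib, Finset.sum_ite_eq, Finset.sum_ite_eq',
    Finset.mem_univ, if_true]
  congr 1
  simp only [Finset.sum_mul]
  rw [Finset.sum_comm]
  exact Finset.sum_congr rfl fun a _ => Finset.sum_congr rfl fun j _ => by ring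

lemma Nmat_mulVec {s k : ℕ} (X : Fin k → Vc s) (q : Fin s → ℝ) (i : Fin s) :
    (Nmat X).mulVec q i
      = (2 * ∑ a, ∑ l, X a (uI l) * X a (tI l)) * q i
        - ∑ a, ((∑ j, X a (tI j) * q j) * X a (uI i) + (∑ j, X a (uI j) * q j) * X a (tI i)) := by
  simp only [Matrix.mulVec, dotProduct, Nmat, Matrix.of_apply, sub_mul, ite_mul,
    zero_mul, Finset.sum_sub_distrib, Finset.sum_ite_eq, Finset.sum_ite_eq',
    Finset.mem_univ, if_true]
  congr 1
  simp only [Finset.sum_mul]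
  rw [Finset.sum_comm]
  simp only [← Finset.sum_add_distrib]
  exact Finset.sum_congr rfl fun a _ => Finset.sum_congr rfl fun j _ => by ring

lemma gM_sum_left {s : ℕ} {ι : Type*} [Fintype ι] (f : ι → Vc s) (w : Vc s) :
    gM s (∑ a, f a) w = ∑ a, gM s (f a) w := by
  simp only [gM, Finset.sum_apply, Finset.sum_mul, ← Finset.sum_sub_distrib,
    ← Finset.sum_add_distrib]
  exact Finset.sum_comm

end Mat
section Core
open Module

lemma no_kernel_vec (s k : ℕ) (hk2 : s + 2 ≤ k)
    (t : Fin k → Fin s → ℝ) (c β : Fin k → ℝ)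
    (hG : ∀ a b, (∑ i, t a i * t b i) = (if a = b then (1:ℝ) else 0) + c a * β b + c b * β a) :
    False := by
  set B : Matrix (Fin s ⊕ Unit) (Fin k) ℝ :=
    Matrix.of fun r a => Sum.elim (fun i => t a i) (fun _ => β a) r with hB
  have hker : 1 ≤ finrank ℝ (LinearMap.ker B.mulVecLin) := by
    have h1 := LinearMap.finrank_range_add_finrank_ker B.mulVecLin
    have h2 : finrank ℝ (LinearMap.range B.mulVecLin) ≤ s + 1 := by
      refine le_trans (Submodule.finrank_le _) ?_
      simp [Module.finrank_pi]
    have h3 : finrank ℝ (Fin k → ℝ) = k := by simp [Module.finrank_pi]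
    omega
  have hne : LinearMap.ker B.mulVecLin ≠ ⊥ := by
    intro h
    rw [h, finrank_bot] at hker
    omega
  obtain ⟨x, hx, hx0⟩ := Submodule.exists_mem_ne_zero_of_ne_bot hne
  rw [LinearMap.mem_ker] at hx
  have h1 : ∀ i, (∑ a, t a i * x a) = 0 := by
    intro i
    have := congrFun hx (Sum.inl i)
    simpa [Matrix.mulVecLin_apply, Matrix.mulVec, dotProduct, hB] using this
  have h2 : (∑ a, β a * x a) = 0 := by
    have := congrFun hx (Sum.inr ())
    simpa [Matrix.mulVecLin_apply, Matrix.mulVec, dotProduct, hB] using this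
  have h5 : ∀ b, x b = -(∑ a, c a * x a) * β b - (∑ a, β a * x a) * c b := by
    intro b
    have e0 : (∑ i, (∑ a, t a i * x a) * t b i) = 0 :=
      Finset.sum_eq_zero fun i _ => by rw [h1 i, zero_mul]
    have e1 : (∑ i, (∑ a, t a i * x a) * t b i) = ∑ a, (∑ i, t a i * t b i) * x a := by
      simp only [Finset.sum_mul]
      rw [Finset.sum_comm]
      exact Finset.sum_congr rfl fun a _ => Finset.sum_congr rfl fun i _ => by ring
    have e2 : (∑ a, (∑ i, t a i * t b i) * x a)
        = x b + (∑ a, c a * x a) * β b + (∑ a, β a * x a) * c b := by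
      rw [Finset.sum_congr rfl fun a (_ : a ∈ Finset.univ) => by rw [hG a b]]
      simp only [add_mul, Finset.sum_add_distrib, ite_mul, one_mul, zero_mul,
        Finset.sum_ite_eq', Finset.mem_univ, if_true, Finset.sum_mul]
      congr 1
      · congr 1
        exact Finset.sum_congr rfl fun a _ => by ring
      · exact Finset.sum_congr rfl fun a _ => by ring
    have := e2 ▸ e1 ▸ e0
    linarith [this]
  have h6 : (∑ b, x b * x b) = 0 := by
    have : (∑ b, x b * x b)
        = ∑ b, (-(∑ a, c a * x a) * β b - (∑ a, β a * x a) * c b) * x b :=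
      Finset.sum_congr rfl fun b _ => by rw [← h5 b]
    rw [this]
    have : (∑ b, (-(∑ a, c a * x a) * β b - (∑ a, β a * x a) * c b) * x b)
        = -(∑ a, c a * x a) * (∑ b, β b * x b) - (∑ a, β a * x a) * (∑ b, c b * x b) := by
      simp only [Finset.mul_sum, ← Finset.sum_sub_distrib]
      exact Finset.sum_congr rfl fun b _ => by ring
    rw [this, h2]
    ring
  refine hx0 (funext fun b => ?_)
  have := (Finset.sum_eq_zero_iff_of_nonneg
    (fun b _ => mul_self_nonneg (x b))).mp h6 b (Finset.mem_univ b)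
  exact mul_self_eq_zero.mp this

end Core
section Key
open Module

lemma sq_expand {n : ℕ} (f g : Fin n → ℝ) (Qn p : ℝ) :
    (∑ i, (Qn * f i - p * g i) ^ 2)
      = Qn ^ 2 * (∑ i, f i ^ 2) - 2 * Qn * p * (∑ i, f i * g i) + p ^ 2 * (∑ i, g i ^ 2) := by
  simp only [Finset.mul_sum, ← Finset.sum_add_distrib, ← Finset.sum_sub_distrib]
  exact Finset.sum_congr rfl fun i _ => by ring

lemma key_inj (s k : ℕ) (hk2 : s + 2 ≤ k)
    (u t v : Fin k → Fin s → ℝ)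
    (hX : ∀ a b, (∑ i, (u a i * v b i + v a i * u b i - t a i * t b i))
      = if a = b then (-1:ℝ) else 0)
    (q : Fin s → ℝ)
    (hq : ∀ i, (∑ a, (∑ j, u a j * q j) * u a i) = (∑ a, ∑ j, u a j ^ 2) * q i) :
    q = 0 := by
  by_contra hq0
  obtain ⟨i0, hi0⟩ := Function.ne_iff.mp hq0
  have hi0' : q i0 ≠ 0 := by simpa using hi0
  have hQn : 0 < ∑ i, q i ^ 2 := by
    have h1 : 0 < q i0 ^ 2 := by positivity
    have h2 : q i0 ^ 2 ≤ ∑ i, q i ^ 2 :=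
      Finset.single_le_sum (fun i _ => sq_nonneg (q i)) (Finset.mem_univ i0)
    linarith
  have h2 : (∑ a, (∑ j, u a j * q j) ^ 2) = (∑ a, ∑ j, u a j ^ 2) * (∑ i, q i ^ 2) := by
    have e1 : (∑ i, (∑ a, (∑ j, u a j * q j) * u a i) * q i)
        = ∑ a, (∑ j, u a j * q j) ^ 2 := by
      simp only [Finset.sum_mul]
      rw [Finset.sum_comm]
      refine Finset.sum_congr rfl fun a _ => ?_
      rw [sq, Finset.sum_mul_sum]
      exact Finset.sum_congr rfl fun i _ => Finset.sum_congr rfl fun j _ => by ring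
    have e2 : (∑ i, ((∑ a, ∑ j, u a j ^ 2) * q i) * q i)
        = (∑ a, ∑ j, u a j ^ 2) * (∑ i, q i ^ 2) := by
      rw [Finset.mul_sum]
      exact Finset.sum_congr rfl fun i _ => by ring
    rw [← e1, Finset.sum_congr rfl fun i (_ : i ∈ Finset.univ) => by rw [hq i], e2]
  have h4 : ∀ a i, (∑ i, q i ^ 2) * u a i = (∑ j, u a j * q j) * q i := by
    have per_a : ∀ a, (∑ i, ((∑ i, q i ^ 2) * u a i - (∑ j, u a j * q j) * q i) ^ 2)
        = (∑ i, q i ^ 2) ^ 2 * (∑ i, u a i ^ 2)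
          - (∑ i, q i ^ 2) * (∑ j, u a j * q j) ^ 2 := by
      intro a
      rw [sq_expand (fun i => u a i) q (∑ i, q i ^ 2) (∑ j, u a j * q j)]
      ring
    have h3 : (∑ a, ∑ i, ((∑ i, q i ^ 2) * u a i - (∑ j, u a j * q j) * q i) ^ 2) = 0 := by
      rw [Finset.sum_congr rfl fun a (_ : a ∈ Finset.univ) => per_a a]
      simp only [Finset.sum_sub_distrib, ← Finset.mul_sum]
      rw [h2]
      ring
    intro a i
    have hz := (Finset.sum_eq_zero_iff_of_nonneg
      (fun a _ => Finset.sum_nonneg fun i _ => sq_nonneg _)).mp h3 a (Finset.mem_univ a)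
    have hz2 := (Finset.sum_eq_zero_iff_of_nonneg
      (fun i _ => sq_nonneg _)).mp hz i (Finset.mem_univ i)
    have := (pow_eq_zero_iff two_ne_zero).mp hz2
    linarith [this]
  have hu : ∀ a i, u a i = ((∑ j, u a j * q j) / (∑ i, q i ^ 2)) * q i := by
    intro a i
    rw [div_mul_eq_mul_div, eq_div_iff hQn.ne']
    linarith [h4 a i]
  refine no_kernel_vec s k hk2 t (fun a => (∑ j, u a j * q j) / (∑ i, q i ^ 2))
    (fun a => ∑ i, q i * v a i) ?_
  intro a b
  have h := hX a b
  have hrw : (∑ i, (u a i * v b i + v a i * u b i - t a i * t b i))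
      = ∑ i, (((∑ j, u a j * q j) / (∑ i, q i ^ 2)) * q i * v b i
          + v a i * (((∑ j, u b j * q j) / (∑ i, q i ^ 2)) * q i) - t a i * t b i) :=
    Finset.sum_congr rfl fun i _ => by rw [hu a i, hu b i]
  rw [hrw] at h
  have hsplit : (∑ i, (((∑ j, u a j * q j) / (∑ i, q i ^ 2)) * q i * v b i
        + v a i * (((∑ j, u b j * q j) / (∑ i, q i ^ 2)) * q i) - t a i * t b i))
      = ((∑ j, u a j * q j) / (∑ i, q i ^ 2)) * (∑ i, q i * v b i)
        + ((∑ j, u b j * q j) / (∑ i, q i ^ 2)) * (∑ i, q i * v a i)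
        - ∑ i, t a i * t b i := by
    simp only [Finset.mul_sum, ← Finset.sum_add_distrib, ← Finset.sum_sub_distrib]
    exact Finset.sum_congr rfl fun i _ => by ring
  rw [hsplit] at h
  by_cases hab : a = b
  · simp only [if_pos hab] at h ⊢
    linarith
  · simp only [if_neg hab] at h ⊢
    linarith

end Key

open Module

/-- if `s + 2 ≤ k ≤ 2s` and `X_1, …, X_k` is a timelike orthonormal
family (`g(X_a,X_b) = -δ_{ab}`), then the higher order Jacobi operator
`J(π) = J(X_1) + … + J(X_k)` satisfies `rank J(π) = 2s`, `rank J(π)² = s`, and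
`J(π)³ = 0`. -/
theorem stmt9 (s : ℕ) (hs : 2 ≤ s)
    (J : Vc s → Module.End ℝ (Vc s))
    (hJ : ∀ x y w : Vc s, gM s (J x y) w = RM s y x x w)
    (k : ℕ) (hk2 : s + 2 ≤ k) (hks : k ≤ 2 * s)
    (X : Fin k → Vc s)
    (hX : ∀ a b, gM s (X a) (X b) = if a = b then -1 else 0) :
    Module.finrank ℝ (LinearMap.range (∑ a, J (X a))) = 2 * s ∧
    Module.finrank ℝ (LinearMap.range ((∑ a, J (X a)) ^ 2)) = s ∧
    (∑ a, J (X a)) ^ 3 = 0 := by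
  
  set S : Module.End ℝ (Vc s) := ∑ a, J (X a) with hSdef
  have hgS : ∀ y w : Vc s, gM s (S y) w = ∑ a, RM s y (X a) (X a) w := by
    intro y w
    have h1 : S y = ∑ a, J (X a) y := by
      rw [hSdef]; exact LinearMap.sum_apply _ _ _
    rw [h1, gM_sum_left]
    exact Finset.sum_congr rfl fun a _ => hJ (X a) y w
  have hSu : ∀ (y : Vc s) (m : Fin s), S y (uI m) = 0 := by
    intro y m
    have h := hgS y (Vv m)
    rw [gM_apply_Vv] at h
    rw [h]
    exact Finset.sum_eq_zero fun a _ => RM_apply_Vv (X a) y m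
  have hSt : ∀ (y : Vc s) (m : Fin s),
      S y (tI m) = (Mmat X).mulVec (fun j => y (uI j)) m := by
    intro y m
    have h := hgS y (Tv m)
    rw [gM_apply_Tv] at h
    have h2 : (∑ a, RM s y (X a) (X a) (Tv m))
        = ∑ a, ((∑ j, X a (uI j) ^ 2) * y (uI m)
            - (∑ j, X a (uI j) * y (uI j)) * X a (uI m)) :=
      Finset.sum_congr rfl fun a _ => RM_apply_Tv (X a) y m
    rw [h2] at h
    rw [Mmat_mulVec]
    simp only [Finset.sum_sub_distrib, Finset.sum_mul] at h ⊢
    linarith [h]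
  have hSv : ∀ (y : Vc s) (m : Fin s),
      S y (vI m) = (Nmat X).mulVec (fun j => y (uI j)) m
        - (Mmat X).mulVec (fun j => y (tI j)) m := by
    intro y m
    have h := hgS y (Uv m)
    rw [gM_apply_Uv] at h
    have h2 : (∑ a, RM s y (X a) (X a) (Uv m))
        = ∑ a, ((2 * ∑ j, X a (uI j) * X a (tI j)) * y (uI m)
          - (∑ j, (X a (tI j) * y (uI j) + y (tI j) * X a (uI j))) * X a (uI m)
          - (∑ j, X a (uI j) * y (uI j)) * X a (tI m)
          + (∑ j, X a (uI j) ^ 2) * y (tI m)) :=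
      Finset.sum_congr rfl fun a _ => RM_apply_Uv (X a) y m
    rw [h2] at h
    rw [h, Nmat_mulVec, Mmat_mulVec]
    simp only [Finset.mul_sum, Finset.sum_mul, add_mul, Finset.sum_add_distrib,
      Finset.sum_sub_distrib]
    have e3 : (∑ x : Fin k, ∑ i : Fin s, y (tI i) * X x (uI i) * X x (uI m))
        = ∑ x : Fin k, ∑ i : Fin s, X x (uI i) * y (tI i) * X x (uI m) :=
      Finset.sum_congr rfl fun a _ => Finset.sum_congr rfl fun i _ => by ring
    rw [e3]
    ring
  -- injectivity of Mmat
  have hinj : Function.Injective (Mmat X).mulVecLin := by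
    rw [injective_iff_map_eq_zero]
    intro q hqz
    refine key_inj s k hk2 (fun a i => X a (uI i)) (fun a i => X a (tI i))
      (fun a i => X a (vI i)) (fun a b => by simpa [gM] using hX a b) q ?_
    intro i
    rw [Matrix.mulVecLin_apply] at hqz
    have h0 : (Mmat X).mulVec q i = 0 := by rw [hqz]; rfl
    rw [Mmat_mulVec] at h0
    linarith [h0]
  have hsurj : Function.Surjective (Mmat X).mulVecLin :=
    LinearMap.injective_iff_surjective.mp hinj
  -- range of S
  have hrange1 : LinearMap.range S
      = LinearMap.ker (LinearMap.funLeft ℝ ℝ (uI : Fin s → Ix s)) := by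
    apply le_antisymm
    · rintro z ⟨y, rfl⟩
      rw [LinearMap.mem_ker]
      funext j
      exact hSu y j
    · intro z hz
      rw [LinearMap.mem_ker] at hz
      have hz' : ∀ j, z (uI j) = 0 := fun j => congrFun hz j
      obtain ⟨q, hq⟩ := hsurj (fun j => z (tI j))
      obtain ⟨r, hr⟩ := hsurj ((Nmat X).mulVec q - fun j => z (vI j))
      rw [Matrix.mulVecLin_apply] at hq hr
      refine ⟨Sum.elim q (Sum.elim r 0), ?_⟩
      funext idx
      rcases idx with i | i | i
      · show S (Sum.elim q (Sum.elim r 0)) (uI i) = z (uI i)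
        rw [hSu]
        exact (hz' i).symm
      · show S (Sum.elim q (Sum.elim r 0)) (tI i) = z (tI i)
        rw [hSt]
        exact congrFun hq i
      · show S (Sum.elim q (Sum.elim r 0)) (vI i) = z (vI i)
        rw [hSv]
        have e2 : (fun j => Sum.elim q (Sum.elim r (0 : Fin s → ℝ)) (tI j)) = r := rfl
        rw [e2]
        have := congrFun hr i
        simp only [Pi.sub_apply] at this
        have e : (fun j => Sum.elim q (Sum.elim r (0 : Fin s → ℝ)) (uI j)) = q := rfl
        rw [e, this]
        ring
  -- second power
  have hS2 : ∀ (y : Vc s) (i : Fin s),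
      (S (S y)) (uI i) = 0 ∧ (S (S y)) (tI i) = 0 ∧
      (S (S y)) (vI i) = -(Mmat X).mulVec ((Mmat X).mulVec (fun j => y (uI j))) i := by
    intro y i
    have hzero : (fun j => S y (uI j)) = (0 : Fin s → ℝ) := funext fun j => hSu y j
    refine ⟨hSu (S y) i, ?_, ?_⟩
    · rw [hSt, hzero, Matrix.mulVec_zero]
      rfl
    · rw [hSv, hzero, Matrix.mulVec_zero]
      have e : (fun j => S y (tI j)) = (Mmat X).mulVec (fun j => y (uI j)) :=
        funext fun j => hSt y j
      rw [e]
      simp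
  have hpow2 : ∀ y : Vc s, (S ^ 2) y = S (S y) := by
    intro y
    rw [pow_two]
    exact Module.End.mul_apply S S y
  have hrange2 : LinearMap.range (S ^ 2)
      = LinearMap.ker (LinearMap.funLeft ℝ ℝ (Sum.elim uI tI : Fin s ⊕ Fin s → Ix s)) := by
    apply le_antisymm
    · rintro z ⟨y, rfl⟩
      rw [LinearMap.mem_ker]
      funext j
      rcases j with i | i
      · show (S ^ 2) y (uI i) = 0
        rw [hpow2 y]
        exact (hS2 y i).1
      · show (S ^ 2) y (tI i) = 0
        rw [hpow2 y]
        exact (hS2 y i).2.1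
    · intro z hz
      rw [LinearMap.mem_ker] at hz
      have hzu : ∀ j, z (uI j) = 0 := fun j => congrFun hz (Sum.inl j)
      have hzt : ∀ j, z (tI j) = 0 := fun j => congrFun hz (Sum.inr j)
      obtain ⟨q1, hq1⟩ := hsurj (fun j => - z (vI j))
      obtain ⟨q, hq⟩ := hsurj q1
      rw [Matrix.mulVecLin_apply] at hq1 hq
      refine ⟨Sum.elim q (Sum.elim 0 0), ?_⟩
      rw [hpow2]
      funext idx
      rcases idx with i | i | i
      · show S (S (Sum.elim q (Sum.elim 0 0))) (uI i) = z (uI i)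
        rw [(hS2 _ i).1]
        exact (hzu i).symm
      · show S (S (Sum.elim q (Sum.elim 0 0))) (tI i) = z (tI i)
        rw [(hS2 _ i).2.1]
        exact (hzt i).symm
      · show S (S (Sum.elim q (Sum.elim 0 0))) (vI i) = z (vI i)
        rw [(hS2 _ i).2.2]
        have e : (fun j => Sum.elim q (Sum.elim (0 : Fin s → ℝ) (0 : Fin s → ℝ)) (uI j)) = q :=
          rfl
        rw [e, hq, congrFun hq1 i]
        ring
  -- S ^ 3 = 0
  have hS3 : S ^ 3 = 0 := by
    apply LinearMap.ext
    intro y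
    have hyy : (S ^ 3) y = S (S (S y)) := by
      rw [pow_succ, Module.End.mul_apply, hpow2]
    rw [hyy, LinearMap.zero_apply]
    have hzu : (fun j => S (S y) (uI j)) = (0 : Fin s → ℝ) :=
      funext fun j => (hS2 y j).1
    have hzt : (fun j => S (S y) (tI j)) = (0 : Fin s → ℝ) :=
      funext fun j => (hS2 y j).2.1
    funext idx
    rcases idx with i | i | i
    · show S (S (S y)) (uI i) = (0:ℝ)
      rw [hSu]
    · show S (S (S y)) (tI i) = (0:ℝ)
      rw [hSt, hzu, Matrix.mulVec_zero]
      rfl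
    · show S (S (S y)) (vI i) = (0:ℝ)
      rw [hSv, hzu, hzt, Matrix.mulVec_zero, Matrix.mulVec_zero]
      simp
  -- finrank computations
  have hcard : finrank ℝ (Vc s) = 3 * s := by
    rw [Module.finrank_pi]
    simp [Ix]
    ring
  have huinj : Function.Injective (uI : Fin s → Ix s) := fun i j h => Sum.inl_injective h
  have hkerU : finrank ℝ (LinearMap.ker (LinearMap.funLeft ℝ ℝ (uI : Fin s → Ix s)))
      = 2 * s := by
    have h1 := LinearMap.finrank_range_add_finrank_ker
      (LinearMap.funLeft ℝ ℝ (uI : Fin s → Ix s))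
    have h2 : LinearMap.range (LinearMap.funLeft ℝ ℝ (uI : Fin s → Ix s)) = ⊤ :=
      LinearMap.range_eq_top.mpr (LinearMap.funLeft_surjective_of_injective ℝ ℝ _ huinj)
    rw [h2, finrank_top, Module.finrank_pi, Fintype.card_fin, hcard] at h1
    omega
  have heinj : Function.Injective (Sum.elim uI tI : Fin s ⊕ Fin s → Ix s) := by
    rintro (i | i) (j | j) h
    · simp only [Sum.elim_inl, uI, Sum.inl.injEq] at h
      rw [h]
    · simp [uI, tI] at h
    · simp [uI, tI] at h
    · simp only [Sum.elim_inr, tI, Sum.inr.injEq, Sum.inl.injEq] at h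
      rw [h]
  have hkerUT : finrank ℝ (LinearMap.ker
      (LinearMap.funLeft ℝ ℝ (Sum.elim uI tI : Fin s ⊕ Fin s → Ix s))) = s := by
    have h1 := LinearMap.finrank_range_add_finrank_ker
      (LinearMap.funLeft ℝ ℝ (Sum.elim uI tI : Fin s ⊕ Fin s → Ix s))
    have h2 : LinearMap.range (LinearMap.funLeft ℝ ℝ
        (Sum.elim uI tI : Fin s ⊕ Fin s → Ix s)) = ⊤ :=
      LinearMap.range_eq_top.mpr (LinearMap.funLeft_surjective_of_injective ℝ ℝ _ heinj)
    have h3 : finrank ℝ (Fin s ⊕ Fin s → ℝ) = 2 * s := by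
      rw [Module.finrank_pi]
      simp
      ring
    rw [h2, finrank_top, h3, hcard] at h1
    omega
  refine ⟨?_, ?_, hS3⟩
  · rw [hrange1]
    exact hkerU
  · rw [hrange2]
    exact hkerUT
end
end

section
/- The higher order Jacobi operator is independent of the choice of orthonormal basis: let ε = 1 or ε = −1, let 1 ≤ k ≤ 3s, and let (e_1, …, e_k) and (f_1, …, f_k) be two families in ℝ^{3s} with g(e_a, e_b) = ε δ_{ab} and g(f_a, f_b) = ε δ_{ab} that span the same linear subspace of ℝ^{3s}. Then J(e_1) + … + J(e_k) = J(f_1) + … + J(f_k). -/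
open scoped BigOperators

noncomputable section

/- In the theorems below, the Jacobi operator is taken as a function
`J : ℝ^{3s} → End(ℝ^{3s})` together with the hypothesis that it satisfies its defining
property `g(J(x)y, w) = R(y,x,x,w)` for all `x, y, w`; since `g` is nondegenerate this
characterizes `J` uniquely. -/

/-- `gM` as a bilinear map. -/
def gL (s : ℕ) : Vc s →ₗ[ℝ] Vc s →ₗ[ℝ] ℝ :=
  LinearMap.mk₂ ℝ (gM s)
    (fun x x' y => by
      simp only [gM, Pi.add_apply]
      rw [← Finset.sum_add_distrib]
      exact Finset.sum_congr rfl fun i _ => by ring)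
    (fun r x y => by
      simp only [gM, Pi.smul_apply, smul_eq_mul, Finset.mul_sum]
      exact Finset.sum_congr rfl fun i _ => by ring)
    (fun x y y' => by
      simp only [gM, Pi.add_apply]
      rw [← Finset.sum_add_distrib]
      exact Finset.sum_congr rfl fun i _ => by ring)
    (fun r x y => by
      simp only [gM, Pi.smul_apply, smul_eq_mul, Finset.mul_sum]
      exact Finset.sum_congr rfl fun i _ => by ring)

/-- `RM` as a bilinear map in the middle two slots. -/
def RB (s : ℕ) (y w : Vc s) : Vc s →ₗ[ℝ] Vc s →ₗ[ℝ] ℝ :=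
  LinearMap.mk₂ ℝ (fun x z => RM s y x z w)
    (fun x x' z => by
      simp only [RM, Pi.add_apply]
      rw [← Finset.sum_add_distrib]
      refine Finset.sum_congr rfl fun i _ => ?_
      rw [← Finset.sum_add_distrib]
      exact Finset.sum_congr rfl fun j _ => by ring)
    (fun r x z => by
      simp only [RM, Pi.smul_apply, smul_eq_mul, Finset.mul_sum]
      refine Finset.sum_congr rfl fun i _ => Finset.sum_congr rfl fun j _ => by ring)
    (fun x z z' => by
      simp only [RM, Pi.add_apply]
      rw [← Finset.sum_add_distrib]
      refine Finset.sum_congr rfl fun i _ => ?_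
      rw [← Finset.sum_add_distrib]
      exact Finset.sum_congr rfl fun j _ => by ring)
    (fun r x z => by
      simp only [RM, Pi.smul_apply, smul_eq_mul, Finset.mul_sum]
      refine Finset.sum_congr rfl fun i _ => Finset.sum_congr rfl fun j _ => by ring)

lemma gM_nondeg {s : ℕ} (x x' : Vc s) (h : ∀ w, gM s x w = gM s x' w) : x = x' := by
  funext idx
  rcases idx with i | i | i
  · have := h (Vv i)
    simpa [gM, Vv, Uv, Tv, uI, tI, vI, Pi.single_apply, Finset.sum_ite_eq] using this
  · have := h (Tv i)
    have h2 := this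
    simp [gM, Vv, Uv, Tv, uI, tI, vI, Pi.single_apply, Finset.sum_ite_eq] at h2
    linarith
  · have := h (Uv i)
    simpa [gM, Vv, Uv, Tv, uI, tI, vI, Pi.single_apply, Finset.sum_ite_eq] using this

/-- the higher order Jacobi operator is independent of the choice of
orthonormal basis: if `ε = ±1`, `1 ≤ k ≤ 3s`, and `(e_1,…,e_k)`, `(f_1,…,f_k)` are two
families with `g(e_a,e_b) = ε δ_{ab}`, `g(f_a,f_b) = ε δ_{ab}` spanning the same
subspace of `ℝ^{3s}`, then `J(e_1) + … + J(e_k) = J(f_1) + … + J(f_k)`. -/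
theorem stmt12 (s : ℕ) (hs : 2 ≤ s)
    (J : Vc s → Module.End ℝ (Vc s))
    (hJ : ∀ x y w : Vc s, gM s (J x y) w = RM s y x x w)
    (ε : ℝ) (hε : ε = 1 ∨ ε = -1)
    (k : ℕ) (hk1 : 1 ≤ k) (hk : k ≤ 3 * s)
    (e f : Fin k → Vc s)
    (he : ∀ a b, gM s (e a) (e b) = if a = b then ε else 0)
    (hf : ∀ a b, gM s (f a) (f b) = if a = b then ε else 0)
    (hspan : Submodule.span ℝ (Set.range e) = Submodule.span ℝ (Set.range f)) :
    (∑ a, J (e a)) = ∑ a, J (f a) := by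
  have hε2 : ε * ε = 1 := by rcases hε with h | h <;> simp [h]
  set c : Fin k → Fin k → ℝ := fun a b => ε * gM s (f a) (e b) with hc
  have key : ∀ x ∈ Submodule.span ℝ (Set.range e),
      (∑ b, (ε * gM s x (e b)) • e b) = x := by
    intro x hx
    induction hx using Submodule.span_induction with
    | mem x hx =>
        obtain ⟨a, rfl⟩ := hx
        have h1 : ∀ b, ε * gM s (e a) (e b) = if a = b then 1 else 0 := by
          intro b; rw [he]; split <;> simp [hε2]
        simp only [h1, ite_smul, one_smul, zero_smul]
        simp [Finset.sum_ite_eq]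
    | zero =>
        simp [gM]
    | add x y _ _ hx hy =>
        have h1 : ∀ b, gM s (x + y) (e b) = gM s x (e b) + gM s y (e b) := by
          intro b
          exact congrArg (fun L => L (e b)) ((gL s).map_add x y)
        simp only [h1, mul_add, add_smul, Finset.sum_add_distrib, hx, hy]
    | smul r x _ hx =>
        have h1 : ∀ b, gM s (r • x) (e b) = r * gM s x (e b) := by
          intro b
          exact congrArg (fun L => L (e b)) ((gL s).map_smul r x)
        calc ∑ b, (ε * gM s (r • x) (e b)) • e b
            = ∑ b, r • ((ε * gM s x (e b)) • e b) := by
              refine Finset.sum_congr rfl fun b _ => ?_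
              rw [h1 b, smul_smul]; congr 1; ring
          _ = r • x := by rw [← Finset.smul_sum, hx]
  have hfe : ∀ a, f a = ∑ b, c a b • e b := by
    intro a
    have : f a ∈ Submodule.span ℝ (Set.range e) := by
      rw [hspan]; exact Submodule.subset_span (Set.mem_range_self a)
    exact (key _ this).symm
  have hge : ∀ a b, gM s (f a) (e b) = ε * c a b := by
    intro a b; simp only [hc]; rw [← mul_assoc, hε2, one_mul]
  have hCCt : ∀ a a', (∑ b, c a b * c a' b) = if a = a' then 1 else 0 := by
    intro a a'
    have expand : gM s (f a') (f a) = ∑ b, c a b * (ε * c a' b) := by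
      conv_lhs => rw [hfe a]
      show gL s (f a') (∑ b, c a b • e b) = _
      rw [map_sum]
      refine Finset.sum_congr rfl fun b _ => ?_
      rw [map_smul, smul_eq_mul]
      show c a b * gM s (f a') (e b) = _
      rw [hge]
    rw [hf] at expand
    have hmul : ε * (∑ b, c a b * c a' b) = ε * (if a = a' then 1 else 0) := by
      rw [Finset.mul_sum]
      have h2 : ∀ b, ε * (c a b * c a' b) = c a b * (ε * c a' b) := fun b => by ring
      simp only [h2]
      rw [← expand]
      by_cases h : a = a'
      · simp [h]
      · simp [h, Ne.symm h]
    have hεne : ε ≠ 0 := by rcases hε with h | h <;> simp [h]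
    exact mul_left_cancel₀ hεne hmul
  have hCtC : ∀ b b', (∑ a, c a b * c a b') = if b = b' then 1 else 0 := by
    intro b b'
    let C : Matrix (Fin k) (Fin k) ℝ := Matrix.of c
    have h1 : C * C.transpose = 1 := by
      ext a a'
      simp only [Matrix.mul_apply, Matrix.transpose_apply, Matrix.of_apply, C]
      rw [hCCt a a']
      simp [Matrix.one_apply]
    have h2 : C.transpose * C = 1 := mul_eq_one_comm.mp h1
    have h3 : (C.transpose * C) b b' = (1 : Matrix (Fin k) (Fin k) ℝ) b b' := by rw [h2]
    simp only [Matrix.mul_apply, Matrix.transpose_apply, Matrix.of_apply, C,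
      Matrix.one_apply] at h3
    exact h3
  apply LinearMap.ext; intro y
  apply gM_nondeg; intro w
  have h1 : ∀ (v : Fin k → Vc s), gM s ((∑ a, J (v a)) y) w = ∑ a, RM s y (v a) (v a) w := by
    intro v
    rw [LinearMap.sum_apply]
    have : gM s (∑ a, J (v a) y) w = ∑ a, gM s (J (v a) y) w := by
      have hms := map_sum (gL s) (fun a => J (v a) y) Finset.univ
      calc gM s (∑ a, J (v a) y) w = gL s (∑ a, J (v a) y) w := rfl
        _ = (∑ a, gL s (J (v a) y)) w := by rw [hms]
        _ = ∑ a, gL s (J (v a) y) w := by rw [LinearMap.sum_apply]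
    rw [this]
    exact Finset.sum_congr rfl fun a _ => hJ _ _ _
  rw [h1 e, h1 f]
  have hRB : ∀ x z : Vc s, RB s y w x z = RM s y x z w := fun _ _ => rfl
  symm
  calc ∑ a, RM s y (f a) (f a) w
      = ∑ a, ∑ b, ∑ b', (c a b * c a b') * RM s y (e b) (e b') w := by
        refine Finset.sum_congr rfl fun a _ => ?_
        rw [← hRB, hfe a]
        rw [map_sum (RB s y w) (fun b => c a b • e b) Finset.univ]
        rw [LinearMap.sum_apply]
        refine Finset.sum_congr rfl fun b _ => ?_
        rw [LinearMap.map_smul, LinearMap.smul_apply, smul_eq_mul]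
        rw [map_sum (RB s y w (e b)) (fun b' => c a b' • e b') Finset.univ]
        rw [Finset.mul_sum]
        refine Finset.sum_congr rfl fun b' _ => ?_
        rw [LinearMap.map_smul, smul_eq_mul, hRB]
        ring
    _ = ∑ b, ∑ b', (∑ a, c a b * c a b') * RM s y (e b) (e b') w := by
        rw [Finset.sum_comm]
        refine Finset.sum_congr rfl fun b _ => ?_
        rw [Finset.sum_comm]
        refine Finset.sum_congr rfl fun b' _ => ?_
        rw [Finset.sum_mul]
    _ = ∑ b, RM s y (e b) (e b) w := by
        refine Finset.sum_congr rfl fun b _ => ?_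
        simp only [hCtC, ite_mul, one_mul, zero_mul]
        simp [Finset.sum_ite_eq]
end
end

section
/- Let A_V := {W ∈ ℝ^{3s} : R(W_1, W_2, W_3, W) = 0 for all W_1, W_2, W_3 ∈ ℝ^{3s}} and A_{T,V} := A_V^⊥ = {W ∈ ℝ^{3s} : g(W, W_1) = 0 for all W_1 ∈ A_V}. Then for any normalized basis {Ũ_1, …, Ũ_s, T̃_1, …, T̃_s, Ṽ_1, …, Ṽ_s} of ℝ^{3s}, one has A_V = Span{Ṽ_1, …, Ṽ_s} and A_{T,V} = Span{T̃_1, …, T̃_s, Ṽ_1, …, Ṽ_s}. -/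
open scoped BigOperators

noncomputable section

/-- The standard basis vector of `ℝ^{3s}` with index `a`. -/
def stdb {s : ℕ} (a : Ix s) : Vc s := Pi.single a 1

/-- A family `b` indexed by `Ix s` (to be thought of as
`Ũ_1,…,Ũ_s,T̃_1,…,T̃_s,Ṽ_1,…,Ṽ_s`) is *normalized* if it is a basis on which `g` and
`R` take exactly the same values as on the standard basis `U_i, T_i, V_i`; i.e. the
only nonzero values of `g` are `g(Ũ_i,Ṽ_i) = g(Ṽ_i,Ũ_i) = 1`, `g(T̃_i,T̃_i) = -1` and
the only nonzero values of `R`, up to its `ℤ₂`-symmetries, are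
`R(Ũ_i,Ũ_j,Ũ_j,T̃_i) = 1` for `i ≠ j`. -/
def IsNormalizedBasis (s : ℕ) (b : Ix s → Vc s) : Prop :=
  LinearIndependent ℝ b ∧ Submodule.span ℝ (Set.range b) = ⊤ ∧
  (∀ a a' : Ix s, gM s (b a) (b a') = gM s (stdb a) (stdb a')) ∧
  (∀ a₁ a₂ a₃ a₄ : Ix s,
    RM s (b a₁) (b a₂) (b a₃) (b a₄) = RM s (stdb a₁) (stdb a₂) (stdb a₃) (stdb a₄))

/-- `A_V = {W : R(W₁,W₂,W₃,W) = 0 for all W₁,W₂,W₃}`. -/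
def AVset (s : ℕ) : Set (Vc s) := {W | ∀ W₁ W₂ W₃ : Vc s, RM s W₁ W₂ W₃ W = 0}

/-- `A_{T,V} = A_V^⊥ = {W : g(W,W₁) = 0 for all W₁ ∈ A_V}`. -/
def ATVset (s : ℕ) : Set (Vc s) := {W | ∀ W₁ ∈ AVset s, gM s W W₁ = 0}

/-!
Sending the standard basis to a normalized basis defines a linear automorphism `φ` of `ℝ^{3s}`;
as `g` and `R` are multilinear and take the same values on both bases, `φ` preserves them and
hence maps `A_V` and `A_{T,V}` onto themselves. So it suffices to treat the standard basis.
Writing `W^X` for the `X`-coordinate of `W`, `R(·,·,·,W)` involves only the `W^{U_i}` and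
`W^{T_i}`, and for some `j ≠ i` (there is one as `s ≥ 2`) we have `R(T_i,U_j,U_j,W) = W^{U_i}`
and `R(U_i,U_j,U_j,W) = W^{T_i}`; hence `A_V = span{V_i}`. Since `g(W,V_i) = W^{U_i}`, then
`A_V^⊥ = span{T_i, V_i}`.
-/

section

variable {s : ℕ}

def RM.toMultilinearMap (s : ℕ) : MultilinearMap ℝ (fun _ : Fin 4 => Vc s) ℝ :=
  MultilinearMap.mk' (fun m => RM s (m 0) (m 1) (m 2) (m 3))
    (fun m i x y => by
      fin_cases i <;>
      · simp only [RM, ← Finset.sum_add_distrib]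
        refine Finset.sum_congr rfl fun _ _ => Finset.sum_congr rfl fun _ _ => ?_
        simp only [Function.update, Fin.isValue, Fin.zero_eta, Fin.mk_one, Fin.reduceFinMk,
          Fin.reduceEq, ↓reduceDIte, Pi.add_apply, one_ne_zero, zero_ne_one]
        ring)
    (fun m i c x => by
      fin_cases i <;>
      · simp only [RM, smul_eq_mul, Finset.mul_sum]
        refine Finset.sum_congr rfl fun _ _ => Finset.sum_congr rfl fun _ _ => ?_
        simp only [Function.update, Fin.isValue, Fin.zero_eta, Fin.mk_one, Fin.reduceFinMk,
          Fin.reduceEq, ↓reduceDIte, Pi.smul_apply, smul_eq_mul, one_ne_zero, zero_ne_one]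
        ring)

def gM.toMultilinearMap (s : ℕ) : MultilinearMap ℝ (fun _ : Fin 2 => Vc s) ℝ :=
  MultilinearMap.mk' (fun m => gM s (m 0) (m 1))
    (fun m i x y => by
      fin_cases i <;>
      · simp only [gM, ← Finset.sum_add_distrib]
        refine Finset.sum_congr rfl fun _ _ => ?_
        simp only [Function.update, Fin.isValue, Fin.zero_eta, Fin.mk_one, ↓reduceDIte,
          Pi.add_apply, one_ne_zero, zero_ne_one]
        ring)
    (fun m i c x => by
      fin_cases i <;>
      · simp only [gM, smul_eq_mul, Finset.mul_sum]
        refine Finset.sum_congr rfl fun _ _ => ?_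
        simp only [Function.update, Fin.isValue, Fin.zero_eta, Fin.mk_one, ↓reduceDIte,
          Pi.smul_apply, smul_eq_mul, one_ne_zero, zero_ne_one]
        ring)

theorem RM_map_eq_of_basis (φ : Vc s →ₗ[ℝ] Vc s)
    (h : ∀ a₁ a₂ a₃ a₄ : Ix s, RM s (φ (stdb a₁)) (φ (stdb a₂)) (φ (stdb a₃)) (φ (stdb a₄))
      = RM s (stdb a₁) (stdb a₂) (stdb a₃) (stdb a₄))
    (x y z w : Vc s) : RM s (φ x) (φ y) (φ z) (φ w) = RM s x y z w := by
  have := Module.Basis.ext_multilinear (fun _ => Pi.basisFun ℝ (Ix s))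
    (f := (RM.toMultilinearMap s).compLinearMap fun _ => φ) (g := RM.toMultilinearMap s)
    fun v => by simpa [RM.toMultilinearMap, stdb] using h (v 0) (v 1) (v 2) (v 3)
  exact MultilinearMap.congr_fun this ![x, y, z, w]

theorem gM_map_eq_of_basis (φ : Vc s →ₗ[ℝ] Vc s)
    (h : ∀ a₁ a₂ : Ix s, gM s (φ (stdb a₁)) (φ (stdb a₂)) = gM s (stdb a₁) (stdb a₂))
    (x y : Vc s) : gM s (φ x) (φ y) = gM s x y := by
  have := Module.Basis.ext_multilinear (fun _ => Pi.basisFun ℝ (Ix s))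
    (f := (gM.toMultilinearMap s).compLinearMap fun _ => φ) (g := gM.toMultilinearMap s)
    fun v => by simpa [gM.toMultilinearMap, stdb] using h (v 0) (v 1)
  exact MultilinearMap.congr_fun this ![x, y]

theorem preimage_AVset {f : Vc s → Vc s} (hf : Function.Surjective f)
    (hR : ∀ x y z w, RM s (f x) (f y) (f z) (f w) = RM s x y z w) :
    f ⁻¹' AVset s = AVset s := by
  ext W
  change (∀ W₁ W₂ W₃, RM s W₁ W₂ W₃ (f W) = 0) ↔ ∀ W₁ W₂ W₃, RM s W₁ W₂ W₃ W = 0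
  rw [hf.forall₃]
  simp only [hR]

theorem preimage_ATVset {f : Vc s → Vc s} (hf : Function.Surjective f)
    (hR : ∀ x y z w, RM s (f x) (f y) (f z) (f w) = RM s x y z w)
    (hg : ∀ x y, gM s (f x) (f y) = gM s x y) :
    f ⁻¹' ATVset s = ATVset s := by
  ext W
  change (∀ W₁ ∈ AVset s, gM s (f W) W₁ = 0) ↔ ∀ W₁ ∈ AVset s, gM s W W₁ = 0
  rw [hf.forall]
  simp only [← Set.mem_preimage (f := f), preimage_AVset hf hR, hg]

theorem RM_Tv_Uv_Uv {i j : Fin s} (hij : i ≠ j) (W : Vc s) :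
    RM s (Tv i) (Uv j) (Uv j) W = W (uI i) := by
  simp only [RM, Tv, Uv, uI, tI, Pi.single_apply, mul_ite, ite_mul, mul_one, mul_zero,
    zero_mul, one_mul, reduceCtorEq, if_false, Sum.inl.injEq, Sum.inr.injEq]
  rw [Fintype.sum_eq_single i fun x hx => by simp [hx]]
  simp [hij, Finset.sum_ite_eq']

theorem RM_Uv_Uv_Uv {i j : Fin s} (hij : i ≠ j) (W : Vc s) :
    RM s (Uv i) (Uv j) (Uv j) W = W (tI i) := by
  simp [RM, Uv, uI, tI, Pi.single_apply, Finset.sum_ite_eq', hij.symm]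

theorem mem_AVset_iff (hs : 2 ≤ s) (W : Vc s) :
    W ∈ AVset s ↔ (∀ i, W (uI i) = 0) ∧ ∀ i, W (tI i) = 0 := by
  have : Nontrivial (Fin s) := Fin.nontrivial_iff_two_le.mpr hs
  refine ⟨fun h => ⟨fun i => ?_, fun i => ?_⟩, fun ⟨hu, ht⟩ _ _ _ => by simp [RM, hu, ht]⟩
  · obtain ⟨j, hj⟩ := exists_ne i
    rw [← RM_Tv_Uv_Uv hj.symm W]
    exact h _ _ _
  · obtain ⟨j, hj⟩ := exists_ne i
    rw [← RM_Uv_Uv_Uv hj.symm W]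
    exact h _ _ _

theorem mem_ATVset_iff (hs : 2 ≤ s) (W : Vc s) :
    W ∈ ATVset s ↔ ∀ i, W (uI i) = 0 := by
  refine ⟨fun h i => ?_, fun hu W' hW' => ?_⟩
  · have hV : Vv i ∈ AVset s := (mem_AVset_iff hs _).2 (by simp [Vv, uI, tI, vI])
    simpa [gM, Vv, uI, vI, tI, Pi.single_apply] using h _ hV
  · obtain ⟨hu', ht'⟩ := (mem_AVset_iff hs W').1 hW'
    simp [gM, hu, hu', ht']

theorem AVset_eq_spanSubset (hs : 2 ≤ s) :
    AVset s = Pi.spanSubset ℝ (Set.range (@vI s)) := by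
  ext W
  rw [SetLike.mem_coe, Pi.mem_spanSubset_iff, mem_AVset_iff hs]
  simp [Sum.forall, uI, tI, vI]

theorem ATVset_eq_span (hs : 2 ≤ s) :
    ATVset s = Pi.spanSubset ℝ (Set.range (@tI s) ∪ Set.range vI) := by
  ext W
  rw [SetLike.mem_coe, Pi.mem_spanSubset_iff, mem_ATVset_iff hs]
  simp [Sum.forall, uI, tI, vI]

end

/-- for any normalized basis `{Ũ_i, T̃_i, Ṽ_i}` of `ℝ^{3s}` one has
`A_V = Span{Ṽ_1,…,Ṽ_s}` and `A_{T,V} = Span{T̃_1,…,T̃_s,Ṽ_1,…,Ṽ_s}`. -/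
theorem stmt13 (s : ℕ) (hs : 2 ≤ s)
    (b : Ix s → Vc s) (hb : IsNormalizedBasis s b) :
    AVset s = ↑(Submodule.span ℝ (Set.range fun i : Fin s => b (vI i))) ∧
    ATVset s = ↑(Submodule.span ℝ
      (Set.range (fun i : Fin s => b (tI i)) ∪ Set.range (fun i : Fin s => b (vI i)))) := by
  obtain ⟨hli, hsp, hg, hR⟩ := hb
  let B := Module.Basis.mk hli hsp.ge
  let φ := (Pi.basisFun ℝ (Ix s)).equiv B (Equiv.refl _)
  have hφ (a : Ix s) : φ (Pi.basisFun ℝ (Ix s) a) = b a :=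
    ((Pi.basisFun ℝ (Ix s)).equiv_apply a B (Equiv.refl _)).trans (Module.Basis.mk_apply ..)
  have hφ_stdb (a : Ix s) : φ (stdb a) = b a := by rw [stdb, ← Pi.basisFun_apply]; exact hφ a
  have hφR := RM_map_eq_of_basis (φ : Vc s →ₗ[ℝ] Vc s) fun a₁ a₂ a₃ a₄ => by
    simpa only [LinearEquiv.coe_coe, hφ_stdb] using hR a₁ a₂ a₃ a₄
  have hφg := gM_map_eq_of_basis (φ : Vc s →ₗ[ℝ] Vc s) fun a₁ a₂ => by
    simpa only [LinearEquiv.coe_coe, hφ_stdb] using hg a₁ a₂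
  have hspan (S : Set (Ix s)) : φ '' Pi.spanSubset ℝ S = Submodule.span ℝ (b '' S) := by
    rw [Pi.spanSubset, ← φ.coe_toLinearMap, ← Submodule.map_coe, Submodule.map_span,
      Set.image_image]
    simp only [LinearEquiv.coe_coe, hφ]
  constructor
  · rw [← φ.surjective.image_preimage (AVset s), preimage_AVset φ.surjective hφR,
      AVset_eq_spanSubset hs, hspan, ← Set.range_comp]
    rfl
  · rw [← φ.surjective.image_preimage (ATVset s), preimage_ATVset φ.surjective hφR hφg,
      ATVset_eq_span hs, hspan, Set.image_union, ← Set.range_comp, ← Set.range_comp]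
    rfl
end
end
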